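/- arXiv:1611.08027 — 5 statements merged into one kernel-verified Lean document; each statement's English description precedes it below -/
import Mathlib

section
/- Let μ,ν>0 and set Sc=ν/μ. Let ε,η>0 and define κ_η=(η/ν³)^{1/6} and κ_β=(η/μ³)^{1/6}. Let t be a tracer spectrum (2D framework) with associated shell sums 𝐭, dissipation rate χ and wavenumber κ_θ. Let wavenumbers satisfy κ0 ≤ κg < κf⁻ ≤ κf⁺ < κ_η, with 4κg ≤ κf⁻ and 4κf⁺ ≤ κ_β, and fix constants c1,…,c7>0. Assume: (i) c1·κ_η²/ln(κ_η/κf⁺) ≤ η/ε ≤ c2·κ_η²/ln(κ_η/κf⁺); (ii) for every κ∈[κg,κf⁻], c3·χ·ε^{-1/3}·κ^{-2/3} ≤ 𝐭_{κ,2κ} ≤ c4·χ·ε^{-1/3}·κ^{-2/3}; (iii) for every κ∈[κf⁺,κ_β], c5·χ·η^{-1/3} ≤ 𝐭_{κ,2κ} ≤ c6·χ·η^{-1/3}; (iv) 𝐭_{κ0,∞} ≤ c7·(𝐭_{κg,κf⁻} + 𝐭_{κf⁺,κ_β}). Then there exist constants c,C>0 depending only on c1,…,c7 such that c ≤ κ_θ²·(a+b)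 ≤ C, where a = κ_β^{-4/3}·Sc^{-1/3}·(κg^{-2/3} − (κf⁻)^{-2/3})·(ln(κ_η/κf⁺))^{-1/3} and b = κ_β^{-2}·ln(κ_β/κf⁺). (Theorem 5.1, first part, of the paper.) -/
open Real

/-- Euclidean norm of a lattice vector `k ∈ ℤ^d`. -/
noncomputable def knorm {d : ℕ} (k : Fin d → ℤ) : ℝ :=
  Real.sqrt (∑ i, ((k i : ℝ)) ^ 2)

/-- Shell sum `𝐭_{κ1,κ2}` (finite upper end). -/
noncomputable def shellSum (d : ℕ) (L κ0 : ℝ) (t : (Fin d → ℤ) → ℝ) (κ1 κ2 : ℝ) : ℝ :=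
  L ^ (-(d : ℤ)) * ∑' k : Fin d → ℤ,
    (if κ1 ≤ κ0 * knorm k ∧ κ0 * knorm k < κ2 then t k else 0)

/-- Shell sum `𝐭_{κ1,∞}`. -/
noncomputable def shellSumTop (d : ℕ) (L κ0 : ℝ) (t : (Fin d → ℤ) → ℝ) (κ1 : ℝ) : ℝ :=
  L ^ (-(d : ℤ)) * ∑' k : Fin d → ℤ, (if κ1 ≤ κ0 * knorm k then t k else 0)

/-- Tracer dissipation rate `χ = μ L^{-d} κ0² Σ_k |k|² t(k)`. -/
noncomputable def chiRate (d : ℕ) (L κ0 μ : ℝ) (t : (Fin d → ℤ) → ℝ) : ℝ :=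
  μ * L ^ (-(d : ℤ)) * κ0 ^ 2 * ∑' k : Fin d → ℤ, knorm k ^ 2 * t k

/-- Indicator wavenumber squared, `κ_θ² = κ0² Σ|k|²t(k) / Σ t(k)`. -/
noncomputable def kThetaSq (d : ℕ) (κ0 : ℝ) (t : (Fin d → ℤ) → ℝ) : ℝ :=
  κ0 ^ 2 * (∑' k : Fin d → ℤ, knorm k ^ 2 * t k) / (∑' k : Fin d → ℤ, t k)

/-- A (discrete) tracer spectrum: nonnegative, vanishing at `k = 0`, not identically
zero, and with `Σ (1+|k|²) t(k) < ∞`. -/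
structure IsTracerSpectrum (d : ℕ) (t : (Fin d → ℤ) → ℝ) : Prop where
  nonneg : ∀ k, 0 ≤ t k
  map_zero : t 0 = 0
  exists_ne_zero : ∃ k, t k ≠ 0
  summable : Summable fun k : Fin d → ℤ => (1 + knorm k ^ 2) * t k

/-!
Since `κ_θ² = χ / (μ 𝐭_{κ0,∞})`, we have `κ_θ² (a + b) = χ ((a + b) / μ) / 𝐭_{κ0,∞}`, and both
`χ ((a + b) / μ)` and `𝐭_{κ0,∞}` are comparable to `χ s` with
`s = ε^{-1/3} (κg^{-2/3} - κf⁻^{-2/3}) + η^{-1/3} ln (κβ / κf⁺)`.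
Numerator: (i) says `ε ≍ η ln (κη / κf⁺) / κη²`, which with `κη, κβ, Sc` written out makes
`a / μ ≍ ε^{-1/3} (κg^{-2/3} - κf⁻^{-2/3})`, while `b / μ = η^{-1/3} ln (κβ / κf⁺)` exactly.
Denominator: by (iv), `𝐭_{κ0,∞} ≍ 𝐭_{κg,κf⁻} + 𝐭_{κf⁺,κβ}`. Cut both ranges into dyadic shells.
The shells of (ii) decay geometrically, so the first sum is comparable to its first shell,
`χ ε^{-1/3} κg^{-2/3}`, and that to `χ ε^{-1/3} (κg^{-2/3} - κf⁻^{-2/3})` because `4κg ≤ κf⁻`.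
The shells of (iii) are flat, so the second sum is `χ η^{-1/3}` times their number, which is
`≍ ln (κβ / κf⁺)` because `4κf⁺ ≤ κβ`.
-/

lemma one_le_knorm {d : ℕ} {k : Fin d → ℤ} (hk : k ≠ 0) : 1 ≤ knorm k := by
  obtain ⟨i, hi⟩ := Function.ne_iff.1 hk
  have hki : (1 : ℝ) ≤ (k i : ℝ) ^ 2 := by
    exact_mod_cast (one_le_sq_iff_one_le_abs _).2 (Int.one_le_abs hi)
  rw [knorm, Real.one_le_sqrt]
  exact hki.trans (Finset.single_le_sum (fun j _ => sq_nonneg (k j : ℝ)) (Finset.mem_univ i))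

lemma exists_dyadic_bracket {κ1 κ2 : ℝ} (hκ1 : 0 < κ1) (h12 : κ1 ≤ κ2) :
    ∃ n : ℕ, 2 ^ n * κ1 ≤ κ2 ∧ κ2 < 2 ^ (n + 1) * κ1 := by
  obtain ⟨n, h1, h2⟩ := exists_nat_pow_near ((one_le_div hκ1).2 h12) one_lt_two
  exact ⟨n, (le_div_iff₀ hκ1).1 h1, (div_lt_iff₀ hκ1).1 h2⟩

lemma two_pow_mul_mem_Icc {κ1 κ2 : ℝ} (hκ1 : 0 < κ1) {n j : ℕ} (hn : 2 ^ n * κ1 ≤ κ2)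
    (hj : j ≤ n) : 2 ^ j * κ1 ∈ Set.Icc κ1 κ2 :=
  ⟨le_mul_of_one_le_left hκ1.le (one_le_pow₀ one_le_two),
    (mul_le_mul_of_nonneg_right (pow_le_pow_right₀ one_le_two hj) hκ1.le).trans hn⟩

lemma two_mul_log_two_le_log_div {κ1 κ2 : ℝ} (hκ1 : 0 < κ1) (h4 : 4 * κ1 ≤ κ2) :
    2 * log 2 ≤ log (κ2 / κ1) := by
  rw [← Real.log_rpow two_pos, show (2 : ℝ) ^ (2 : ℝ) = 4 by norm_num]
  exact Real.log_le_log four_pos ((le_div_iff₀ hκ1).2 h4)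

lemma one_sub_rpow_mul_rpow_le_rpow_sub_rpow {c x y q : ℝ} (hc : 0 < c) (hx : 0 < x)
    (hxy : c * x ≤ y) (hq : q ≤ 0) : (1 - c ^ q) * x ^ q ≤ x ^ q - y ^ q := by
  have := Real.rpow_le_rpow_of_nonpos (by positivity) hxy hq
  rw [Real.mul_rpow hc.le hx.le] at this
  linarith

lemma add_comparable {x y α β m m' M M' : ℝ} (hα : 0 ≤ α) (hβ : 0 ≤ β)
    (hx : m * α ≤ x ∧ x ≤ M * α) (hy : m' * β ≤ y ∧ y ≤ M' * β) :
    min m m' * (α + β) ≤ x + y ∧ x + y ≤ max M M' * (α + β) := by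
  have := mul_le_mul_of_nonneg_right (min_le_left m m') hα
  have := mul_le_mul_of_nonneg_right (min_le_right m m') hβ
  have := mul_le_mul_of_nonneg_right (le_max_left M M') hα
  have := mul_le_mul_of_nonneg_right (le_max_right M M') hβ
  constructor <;> linarith

lemma div_comparable {N T s m M m' M' : ℝ} (hs : 0 < s) (hm : 0 ≤ m) (hm' : 0 < m')
    (hN : m * s ≤ N ∧ N ≤ M * s) (hT : m' * s ≤ T ∧ T ≤ M' * s) :
    m / M' ≤ N / T ∧ N / T ≤ M / m' := by
  have hT0 : 0 < T := (mul_pos hm' hs).trans_le hT.1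
  have hM' : 0 < M' := pos_of_mul_pos_left (hT0.trans_le hT.2) hs.le
  constructor
  · rw [div_le_div_iff₀ hM' hT0]
    nlinarith
  · have hM : 0 ≤ M := nonneg_of_mul_nonneg_left (by nlinarith) hs
    rw [div_le_div_iff₀ hT0 hm']
    nlinarith [mul_le_mul_of_nonneg_left hT.1 hM, mul_le_mul_of_nonneg_right hN.2 hm'.le]

lemma rpow_comparable {c1 c2 ε E p : ℝ} (hc1 : 0 < c1) (hc2 : 0 ≤ c2) (hε : 0 < ε) (hp : p ≤ 0)
    (h1 : c1 * ε ≤ E) (h2 : E ≤ c2 * ε) : c2 ^ p * ε ^ p ≤ E ^ p ∧ E ^ p ≤ c1 ^ p * ε ^ p := by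
  rw [← Real.mul_rpow hc2 hε.le, ← Real.mul_rpow hc1.le hε.le]
  exact ⟨Real.rpow_le_rpow_of_nonpos ((mul_pos hc1 hε).trans_le h1) h2 hp,
    Real.rpow_le_rpow_of_nonpos (by positivity) h1 hp⟩

section TracerSpectrum

variable {d : ℕ} {t : (Fin d → ℤ) → ℝ}

lemma IsTracerSpectrum.summable_ite (ht : IsTracerSpectrum d t) (P : (Fin d → ℤ) → Prop)
    [DecidablePred P] : Summable fun k => if P k then t k else 0 := by
  refine ht.summable.of_nonneg_of_le (fun k => ?_) (fun k => ?_)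
  · split_ifs
    exacts [ht.nonneg k, le_rfl]
  · split_ifs
    exacts [le_mul_of_one_le_left (ht.nonneg k) (le_add_of_nonneg_right (sq_nonneg _)),
      mul_nonneg (by positivity) (ht.nonneg k)]

lemma IsTracerSpectrum.summable_knorm_sq_mul (ht : IsTracerSpectrum d t) :
    Summable fun k => knorm k ^ 2 * t k :=
  ht.summable.of_nonneg_of_le (fun k => mul_nonneg (sq_nonneg _) (ht.nonneg k))
    (fun k => mul_le_mul_of_nonneg_right (le_add_of_nonneg_left zero_le_one) (ht.nonneg k))

lemma IsTracerSpectrum.tsum_knorm_sq_mul_pos (ht : IsTracerSpectrum d t) :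
    0 < ∑' k, knorm k ^ 2 * t k := by
  obtain ⟨k, hk⟩ := ht.exists_ne_zero
  have hk0 : k ≠ 0 := by rintro rfl; exact hk ht.map_zero
  refine ht.summable_knorm_sq_mul.tsum_pos (fun j => mul_nonneg (sq_nonneg _) (ht.nonneg j)) k ?_
  exact mul_pos (by nlinarith [one_le_knorm hk0]) ((ht.nonneg k).lt_of_ne' hk)

lemma IsTracerSpectrum.chiRate_pos (ht : IsTracerSpectrum d t) {L κ0 μ : ℝ} (hL : 0 < L)
    (hκ0 : κ0 ≠ 0) (hμ : 0 < μ) : 0 < chiRate d L κ0 μ t := by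
  have := ht.tsum_knorm_sq_mul_pos
  unfold chiRate
  positivity

variable {L κ0 : ℝ}

lemma shellSum_nonneg (ht : IsTracerSpectrum d t) (hL : 0 ≤ L) (κ1 κ2 : ℝ) :
    0 ≤ shellSum d L κ0 t κ1 κ2 :=
  mul_nonneg (zpow_nonneg hL _) (tsum_nonneg fun k => by split_ifs <;> simp [ht.nonneg k])

lemma shellSum_self (κ : ℝ) : shellSum d L κ0 t κ κ = 0 := by
  have hempty (k : Fin d → ℤ) : ¬(κ ≤ κ0 * knorm k ∧ κ0 * knorm k < κ) :=
    fun h => (h.1.trans_lt h.2).false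
  simp [shellSum, hempty]

lemma shellSum_add (ht : IsTracerSpectrum d t) {κ1 κ2 κ3 : ℝ} (h12 : κ1 ≤ κ2) (h23 : κ2 ≤ κ3) :
    shellSum d L κ0 t κ1 κ2 + shellSum d L κ0 t κ2 κ3 = shellSum d L κ0 t κ1 κ3 := by
  rw [shellSum, shellSum, shellSum, ← mul_add,
    ← (ht.summable_ite _).tsum_add (ht.summable_ite _)]
  congr 1
  refine tsum_congr fun k => ?_
  split_ifs <;> grind

lemma shellSum_mono_right (ht : IsTracerSpectrum d t) (hL : 0 ≤ L) {κ1 κ2 κ3 : ℝ}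
    (h12 : κ1 ≤ κ2) (h23 : κ2 ≤ κ3) : shellSum d L κ0 t κ1 κ2 ≤ shellSum d L κ0 t κ1 κ3 := by
  rw [← shellSum_add ht h12 h23]
  exact le_add_of_nonneg_right (shellSum_nonneg ht hL _ _)

lemma shellSum_add_shellSum_le_shellSumTop (ht : IsTracerSpectrum d t) (hL : 0 ≤ L)
    {κ κ1 κ2 κ3 κ4 : ℝ} (h1 : κ ≤ κ1) (h12 : κ1 ≤ κ2) (h23 : κ2 ≤ κ3) :
    shellSum d L κ0 t κ1 κ2 + shellSum d L κ0 t κ3 κ4 ≤ shellSumTop d L κ0 t κ := by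
  rw [shellSum, shellSum, shellSumTop, ← mul_add,
    ← (ht.summable_ite _).tsum_add (ht.summable_ite _)]
  refine mul_le_mul_of_nonneg_left (((ht.summable_ite _).add (ht.summable_ite _)).tsum_le_tsum
    (fun k => ?_) (ht.summable_ite _)) (zpow_nonneg hL _)
  have := ht.nonneg k
  split_ifs <;> grind

lemma shellSumTop_eq (ht : IsTracerSpectrum d t) (hκ0 : 0 < κ0) :
    shellSumTop d L κ0 t κ0 = L ^ (-(d : ℤ)) * ∑' k, t k := by
  rw [shellSumTop]
  congr 1
  refine tsum_congr fun k => ?_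
  rcases eq_or_ne k 0 with rfl | hk
  · simp [ht.map_zero]
  · rw [if_pos (le_mul_of_one_le_right hκ0.le (one_le_knorm hk))]

lemma kThetaSq_eq_chiRate_div (ht : IsTracerSpectrum d t) {μ : ℝ} (hL : L ≠ 0) (hμ : μ ≠ 0)
    (hκ0 : 0 < κ0) :
    kThetaSq d κ0 t = chiRate d L κ0 μ t / (μ * shellSumTop d L κ0 t κ0) := by
  rw [shellSumTop_eq ht hκ0, kThetaSq, chiRate, ← mul_assoc,
    show μ * L ^ (-(d : ℤ)) * κ0 ^ 2 * ∑' k, knorm k ^ 2 * t k =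
      μ * L ^ (-(d : ℤ)) * (κ0 ^ 2 * ∑' k, knorm k ^ 2 * t k) by ring,
    mul_div_mul_left _ _ (mul_ne_zero hμ (zpow_ne_zero _ hL))]

lemma shellSum_eq_sum_dyadic (ht : IsTracerSpectrum d t) {κ1 : ℝ} (hκ1 : 0 ≤ κ1) (n : ℕ) :
    shellSum d L κ0 t κ1 (2 ^ n * κ1) =
      ∑ j ∈ Finset.range n, shellSum d L κ0 t (2 ^ j * κ1) (2 * (2 ^ j * κ1)) := by
  induction n with
  | zero => simp [shellSum_self]
  | succ n ih =>
    have h2n : κ1 ≤ 2 ^ n * κ1 := le_mul_of_one_le_left hκ1 (one_le_pow₀ one_le_two)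
    rw [Finset.sum_range_succ, ← ih, pow_succ', mul_assoc,
      shellSum_add ht h2n (by linarith)]

lemma shellSum_le_of_shellSum_le_rpow (ht : IsTracerSpectrum d t) (hL : 0 ≤ L)
    {A q κ1 κ2 : ℝ} (hq : q < 0) (hκ1 : 0 < κ1) (h12 : κ1 ≤ κ2)
    (h : ∀ κ, κ1 ≤ κ → κ ≤ κ2 → shellSum d L κ0 t κ (2 * κ) ≤ A * κ ^ q) :
    shellSum d L κ0 t κ1 κ2 ≤ A * κ1 ^ q / (1 - 2 ^ q) := by
  obtain ⟨n, hn, hn'⟩ := exists_dyadic_bracket hκ1 h12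
  have hA : 0 ≤ A * κ1 ^ q := (shellSum_nonneg ht hL _ _).trans (h κ1 le_rfl h12)
  have hshell : ∀ j ∈ Finset.range (n + 1),
      shellSum d L κ0 t (2 ^ j * κ1) (2 * (2 ^ j * κ1)) ≤ A * κ1 ^ q * (2 ^ q) ^ j := by
    intro j hj
    obtain ⟨hj1, hj2⟩ := two_pow_mul_mem_Icc hκ1 hn (Finset.mem_range_succ_iff.1 hj)
    convert h _ hj1 hj2 using 1
    rw [Real.mul_rpow (by positivity) hκ1.le, Real.rpow_pow_comm zero_le_two]
    ring
  calc shellSum d L κ0 t κ1 κ2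
      ≤ shellSum d L κ0 t κ1 (2 ^ (n + 1) * κ1) := shellSum_mono_right ht hL h12 hn'.le
    _ = ∑ j ∈ Finset.range (n + 1), shellSum d L κ0 t (2 ^ j * κ1) (2 * (2 ^ j * κ1)) :=
        shellSum_eq_sum_dyadic ht hκ1.le _
    _ ≤ ∑ j ∈ Finset.range (n + 1), A * κ1 ^ q * (2 ^ q) ^ j := Finset.sum_le_sum hshell
    _ = A * κ1 ^ q * ∑ j ∈ Finset.Ico 0 (n + 1), ((2 : ℝ) ^ q) ^ j := by
        rw [Finset.mul_sum, Finset.range_eq_Ico]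
    _ ≤ A * κ1 ^ q * ((2 ^ q) ^ 0 / (1 - 2 ^ q)) :=
        mul_le_mul_of_nonneg_left (geom_sum_Ico_le_of_lt_one (by positivity)
          (Real.rpow_lt_one_of_one_lt_of_neg one_lt_two hq)) hA
    _ = A * κ1 ^ q / (1 - 2 ^ q) := by ring

lemma le_shellSum_of_le_shellSum (ht : IsTracerSpectrum d t) (hL : 0 ≤ L)
    {A κ1 κ2 : ℝ} (hA : 0 ≤ A) (hκ1 : 0 < κ1) (h4 : 4 * κ1 ≤ κ2)
    (h : ∀ κ, κ1 ≤ κ → κ ≤ κ2 → A ≤ shellSum d L κ0 t κ (2 * κ)) :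
    A / (2 * log 2) * log (κ2 / κ1) ≤ shellSum d L κ0 t κ1 κ2 := by
  obtain ⟨n, hn, hn'⟩ := exists_dyadic_bracket hκ1 (by linarith)
  have hlog : log (κ2 / κ1) < (n + 1) * log 2 := by
    have := Real.log_lt_log (div_pos (by linarith) hκ1) ((div_lt_iff₀ hκ1).2 hn')
    rwa [Real.log_pow, Nat.cast_succ] at this
  have hlog2 := two_mul_log_two_le_log_div hκ1 h4
  have hcount : log (κ2 / κ1) / (2 * log 2) ≤ n := by
    rw [div_le_iff₀ (by positivity)]
    nlinarith
  calc A / (2 * log 2) * log (κ2 / κ1) = log (κ2 / κ1) / (2 * log 2) * A := by ring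
    _ ≤ n * A := mul_le_mul_of_nonneg_right hcount hA
    _ = (Finset.range n).card • A := by simp
    _ ≤ ∑ j ∈ Finset.range n, shellSum d L κ0 t (2 ^ j * κ1) (2 * (2 ^ j * κ1)) := by
        refine Finset.card_nsmul_le_sum _ _ _ fun j hj => ?_
        obtain ⟨hj1, hj2⟩ := two_pow_mul_mem_Icc hκ1 hn (Finset.mem_range.1 hj).le
        exact h _ hj1 hj2
    _ = shellSum d L κ0 t κ1 (2 ^ n * κ1) := (shellSum_eq_sum_dyadic ht hκ1.le n).symm
    _ ≤ shellSum d L κ0 t κ1 κ2 :=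
        shellSum_mono_right ht hL (two_pow_mul_mem_Icc hκ1 hn le_rfl).1 hn

lemma shellSum_le_of_shellSum_le (ht : IsTracerSpectrum d t) (hL : 0 ≤ L)
    {B κ1 κ2 : ℝ} (hκ1 : 0 < κ1) (h4 : 4 * κ1 ≤ κ2)
    (h : ∀ κ, κ1 ≤ κ → κ ≤ κ2 → shellSum d L κ0 t κ (2 * κ) ≤ B) :
    shellSum d L κ0 t κ1 κ2 ≤ 3 * B / (2 * log 2) * log (κ2 / κ1) := by
  obtain ⟨n, hn, hn'⟩ := exists_dyadic_bracket hκ1 (by linarith)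
  have hB : 0 ≤ B := (shellSum_nonneg ht hL _ _).trans (h κ1 le_rfl (by linarith))
  have hlog : n * log 2 ≤ log (κ2 / κ1) := by
    have := Real.log_le_log (by positivity) ((le_div_iff₀ hκ1).2 hn)
    rwa [Real.log_pow] at this
  have hlog2 := two_mul_log_two_le_log_div hκ1 h4
  have hcount : (n + 1 : ℝ) ≤ 3 * log (κ2 / κ1) / (2 * log 2) := by
    rw [le_div_iff₀ (by positivity)]
    nlinarith
  calc shellSum d L κ0 t κ1 κ2
      ≤ shellSum d L κ0 t κ1 (2 ^ (n + 1) * κ1) := shellSum_mono_right ht hL (by linarith) hn'.le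
    _ = ∑ j ∈ Finset.range (n + 1), shellSum d L κ0 t (2 ^ j * κ1) (2 * (2 ^ j * κ1)) :=
        shellSum_eq_sum_dyadic ht hκ1.le _
    _ ≤ (Finset.range (n + 1)).card • B := by
        refine Finset.sum_le_card_nsmul _ _ _ fun j hj => ?_
        obtain ⟨hj1, hj2⟩ := two_pow_mul_mem_Icc hκ1 hn (Finset.mem_range_succ_iff.1 hj)
        exact h _ hj1 hj2
    _ = (n + 1 : ℝ) * B := by simp
    _ ≤ 3 * log (κ2 / κ1) / (2 * log 2) * B := mul_le_mul_of_nonneg_right hcount hB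
    _ = 3 * B / (2 * log 2) * log (κ2 / κ1) := by ring

lemma shellSum_comparable_of_rpow (ht : IsTracerSpectrum d t) (hL : 0 ≤ L)
    {A B q κ1 κ2 : ℝ} (hq : q < 0) (hA : 0 ≤ A) (hκ1 : 0 < κ1) (h4 : 4 * κ1 ≤ κ2)
    (h : ∀ κ, κ1 ≤ κ → κ ≤ κ2 →
      A * κ ^ q ≤ shellSum d L κ0 t κ (2 * κ) ∧ shellSum d L κ0 t κ (2 * κ) ≤ B * κ ^ q) :
    A * (κ1 ^ q - κ2 ^ q) ≤ shellSum d L κ0 t κ1 κ2 ∧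
      shellSum d L κ0 t κ1 κ2 ≤ B / ((1 - 2 ^ q) * (1 - 4 ^ q)) * (κ1 ^ q - κ2 ^ q) := by
  have h12 : κ1 ≤ κ2 := by linarith
  have hgap := one_sub_rpow_mul_rpow_le_rpow_sub_rpow four_pos hκ1 h4 hq.le
  have h2 : 0 < 1 - (2 : ℝ) ^ q := sub_pos.2 (Real.rpow_lt_one_of_one_lt_of_neg one_lt_two hq)
  have h4' : 0 < 1 - (4 : ℝ) ^ q := sub_pos.2 (Real.rpow_lt_one_of_one_lt_of_neg (by norm_num) hq)
  have hκ1q : 0 < κ1 ^ q := by positivity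
  have hB : 0 ≤ B := nonneg_of_mul_nonneg_left
    ((shellSum_nonneg ht hL _ _).trans (h κ1 le_rfl h12).2) hκ1q
  constructor
  · calc A * (κ1 ^ q - κ2 ^ q) ≤ A * κ1 ^ q :=
          mul_le_mul_of_nonneg_left (sub_le_self _ (Real.rpow_nonneg (by linarith) _)) hA
      _ ≤ shellSum d L κ0 t κ1 (2 * κ1) := (h κ1 le_rfl h12).1
      _ ≤ shellSum d L κ0 t κ1 κ2 := shellSum_mono_right ht hL (by linarith) (by linarith)
  · calc shellSum d L κ0 t κ1 κ2 ≤ B * κ1 ^ q / (1 - 2 ^ q) :=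
          shellSum_le_of_shellSum_le_rpow ht hL hq hκ1 h12 fun κ h1 h2 => (h κ h1 h2).2
      _ ≤ B / ((1 - 2 ^ q) * (1 - 4 ^ q)) * (κ1 ^ q - κ2 ^ q) := by
          rw [div_mul_eq_mul_div, div_le_div_iff₀ h2 (by positivity)]
          nlinarith [mul_le_mul_of_nonneg_left hgap hB]

lemma shellSumTop_comparable (ht : IsTracerSpectrum d t) (hL : 0 ≤ L)
    {c3 c4 c5 c6 c7 χ u v q κg κfm κfp κβ : ℝ} (hq : q < 0) (hc3 : 0 ≤ c3) (hc5 : 0 ≤ c5)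
    (hc7 : 0 ≤ c7) (hχ : 0 ≤ χ) (hu : 0 ≤ u) (hv : 0 ≤ v) (hκg : 0 < κg) (h0g : κ0 ≤ κg)
    (h4g : 4 * κg ≤ κfm) (hmp : κfm ≤ κfp) (h4p : 4 * κfp ≤ κβ)
    (hii : ∀ κ, κg ≤ κ → κ ≤ κfm → c3 * χ * u * κ ^ q ≤ shellSum d L κ0 t κ (2 * κ) ∧
      shellSum d L κ0 t κ (2 * κ) ≤ c4 * χ * u * κ ^ q)
    (hiii : ∀ κ, κfp ≤ κ → κ ≤ κβ → c5 * χ * v ≤ shellSum d L κ0 t κ (2 * κ) ∧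
      shellSum d L κ0 t κ (2 * κ) ≤ c6 * χ * v)
    (hiv : shellSumTop d L κ0 t κ0 ≤
      c7 * (shellSum d L κ0 t κg κfm + shellSum d L κ0 t κfp κβ)) :
    min c3 (c5 / (2 * log 2)) * (χ * (u * (κg ^ q - κfm ^ q) + v * log (κβ / κfp))) ≤
        shellSumTop d L κ0 t κ0 ∧
      shellSumTop d L κ0 t κ0 ≤ c7 * max (c4 / ((1 - 2 ^ q) * (1 - 4 ^ q))) (3 * c6 / (2 * log 2)) *
        (χ * (u * (κg ^ q - κfm ^ q) + v * log (κβ / κfp))) := by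
  have hκfp : 0 < κfp := by linarith
  have hSG := shellSum_comparable_of_rpow ht hL hq (by positivity) hκg h4g hii
  have hSB_lo :=
    le_shellSum_of_le_shellSum ht hL (by positivity) hκfp h4p fun κ h1 h2 => (hiii κ h1 h2).1
  have hSB_hi := shellSum_le_of_shellSum_le ht hL hκfp h4p fun κ h1 h2 => (hiii κ h1 h2).2
  have hΔ : 0 ≤ κg ^ q - κfm ^ q :=
    sub_nonneg.2 (Real.rpow_le_rpow_of_nonpos hκg (by linarith) hq.le)
  have hr : 0 ≤ log (κβ / κfp) := Real.log_nonneg ((one_le_div hκfp).2 (by linarith))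
  have hsum := add_comparable (α := χ * u * (κg ^ q - κfm ^ q)) (β := χ * v * log (κβ / κfp))
    (m := c3) (M := c4 / ((1 - 2 ^ q) * (1 - 4 ^ q)))
    (m' := c5 / (2 * log 2)) (M' := 3 * c6 / (2 * log 2)) (by positivity) (by positivity)
    ⟨Eq.trans_le (by ring) hSG.1, hSG.2.trans_eq (by ring)⟩
    ⟨Eq.trans_le (by ring) hSB_lo, hSB_hi.trans_eq (by ring)⟩
  have htop :=
    shellSum_add_shellSum_le_shellSumTop ht hL (κ0 := κ0) (κ4 := κβ) h0g (by linarith) hmp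
  rw [mul_add, ← mul_assoc, ← mul_assoc]
  constructor
  · linarith [hsum.1]
  · calc shellSumTop d L κ0 t κ0
        ≤ c7 * (shellSum d L κ0 t κg κfm + shellSum d L κ0 t κfp κβ) := hiv
      _ ≤ c7 * (max (c4 / ((1 - 2 ^ q) * (1 - 4 ^ q))) (3 * c6 / (2 * log 2)) *
          (χ * u * (κg ^ q - κfm ^ q) + χ * v * log (κβ / κfp))) :=
          mul_le_mul_of_nonneg_left hsum.2 hc7
      _ = _ := by ring

end TracerSpectrum

lemma kappaBeta_schmidt_factor_eq {μ ν η ℓ : ℝ} (hμ : 0 < μ) (hν : 0 < ν) (hη : 0 < η)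
    (hℓ : 0 < ℓ) :
    ((η / μ ^ 3) ^ (1 / 6 : ℝ)) ^ (-4 / 3 : ℝ) * (ν / μ) ^ (-1 / 3 : ℝ) * ℓ ^ (-1 / 3 : ℝ) =
      μ * (η * ℓ / ((η / ν ^ 3) ^ (1 / 6 : ℝ)) ^ 2) ^ (-1 / 3 : ℝ) := by
  refine Real.log_injOn_pos (Set.mem_Ioi.2 (by positivity)) (Set.mem_Ioi.2 (by positivity)) ?_
  simp (disch := positivity) only [Real.log_mul, Real.log_div, Real.log_rpow, Real.log_pow]
  push_cast
  ring

lemma kappaBeta_rpow_neg_two_eq {μ η : ℝ} (hμ : 0 < μ) (hη : 0 < η) :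
    ((η / μ ^ 3) ^ (1 / 6 : ℝ)) ^ (-2 : ℝ) = μ * η ^ (-1 / 3 : ℝ) := by
  refine Real.log_injOn_pos (Set.mem_Ioi.2 (by positivity)) (Set.mem_Ioi.2 (by positivity)) ?_
  simp (disch := positivity) only [Real.log_mul, Real.log_div, Real.log_rpow, Real.log_pow]
  push_cast
  ring

lemma weights_comparable {c1 c2 μ ν ε η κη κβ Sc ℓ Δ r : ℝ} (hc1 : 0 < c1) (hc2 : 0 < c2)
    (hμ : 0 < μ) (hν : 0 < ν) (hε : 0 < ε) (hη : 0 < η) (hℓ : 0 < ℓ) (hΔ : 0 ≤ Δ) (hr : 0 ≤ r)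
    (hκη : κη = (η / ν ^ 3) ^ (1 / 6 : ℝ)) (hκβ : κβ = (η / μ ^ 3) ^ (1 / 6 : ℝ))
    (hSc : Sc = ν / μ) (hi : c1 * κη ^ 2 / ℓ ≤ η / ε ∧ η / ε ≤ c2 * κη ^ 2 / ℓ) :
    min (c2 ^ (-1 / 3 : ℝ)) 1 * (ε ^ (-1 / 3 : ℝ) * Δ + η ^ (-1 / 3 : ℝ) * r) ≤
        (κβ ^ (-4 / 3 : ℝ) * Sc ^ (-1 / 3 : ℝ) * Δ * ℓ ^ (-1 / 3 : ℝ) + κβ ^ (-2 : ℝ) * r) / μ ∧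
      (κβ ^ (-4 / 3 : ℝ) * Sc ^ (-1 / 3 : ℝ) * Δ * ℓ ^ (-1 / 3 : ℝ) + κβ ^ (-2 : ℝ) * r) / μ ≤
        max (c1 ^ (-1 / 3 : ℝ)) 1 * (ε ^ (-1 / 3 : ℝ) * Δ + η ^ (-1 / 3 : ℝ) * r) := by
  have hκη0 : 0 < κη := by rw [hκη]; positivity
  have hE : c1 * ε ≤ η * ℓ / κη ^ 2 ∧ η * ℓ / κη ^ 2 ≤ c2 * ε := by
    obtain ⟨h1, h2⟩ := hi
    rw [div_le_div_iff₀ hℓ hε] at h1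
    rw [div_le_div_iff₀ hε hℓ] at h2
    constructor
    · rw [le_div_iff₀ (by positivity)]; linarith
    · rw [div_le_iff₀ (by positivity)]; linarith
  have hsplit : (κβ ^ (-4 / 3 : ℝ) * Sc ^ (-1 / 3 : ℝ) * Δ * ℓ ^ (-1 / 3 : ℝ) +
      κβ ^ (-2 : ℝ) * r) / μ = (η * ℓ / κη ^ 2) ^ (-1 / 3 : ℝ) * Δ + η ^ (-1 / 3 : ℝ) * r := by
    subst hκη hκβ hSc
    rw [mul_right_comm _ Δ, kappaBeta_schmidt_factor_eq hμ hν hη hℓ,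
      kappaBeta_rpow_neg_two_eq hμ hη]
    field_simp
  obtain ⟨hlo, hup⟩ := rpow_comparable (p := -1 / 3) hc1 hc2.le hε (by norm_num) hE.1 hE.2
  rw [hsplit]
  exact add_comparable (by positivity) (by positivity)
    ⟨by rw [← mul_assoc]; exact mul_le_mul_of_nonneg_right hlo hΔ,
      by rw [← mul_assoc]; exact mul_le_mul_of_nonneg_right hup hΔ⟩
    ⟨(one_mul _).le, (one_mul _).ge⟩

theorem tracer_2D_large_Schmidt_general
    (c1 c2 c3 c4 c5 c6 c7 : ℝ)
    (hc1 : 0 < c1) (hc2 : 0 < c2) (hc3 : 0 < c3)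
    (hc5 : 0 < c5) (hc6 : 0 < c6) (hc7 : 0 < c7) :
    ∃ c C : ℝ, 0 < c ∧ 0 < C ∧
      ∀ (L μ ν ε η κg κfm κfp κ0 Sc κη κβ χ a b : ℝ) (t : (Fin 2 → ℤ) → ℝ),
        0 < L → 0 < μ → 0 < ν → 0 < ε → 0 < η →
        IsTracerSpectrum 2 t →
        κ0 = 2 * π / L →
        Sc = ν / μ →
        κη = (η / ν ^ 3) ^ (1 / 6 : ℝ) →
        κβ = (η / μ ^ 3) ^ (1 / 6 : ℝ) →
        χ = chiRate 2 L κ0 μ t →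
        a = κβ ^ (-4 / 3 : ℝ) * Sc ^ (-1 / 3 : ℝ)
              * (κg ^ (-2 / 3 : ℝ) - κfm ^ (-2 / 3 : ℝ))
              * (Real.log (κη / κfp)) ^ (-1 / 3 : ℝ) →
        b = κβ ^ (-2 : ℝ) * Real.log (κβ / κfp) →
        κ0 ≤ κg → κg < κfm → κfm ≤ κfp → κfp < κη →
        4 * κg ≤ κfm → 4 * κfp ≤ κβ →
        (c1 * κη ^ 2 / Real.log (κη / κfp) ≤ η / ε ∧
          η / ε ≤ c2 * κη ^ 2 / Real.log (κη / κfp)) →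
        (∀ κ, κg ≤ κ → κ ≤ κfm →
          c3 * χ * ε ^ (-1 / 3 : ℝ) * κ ^ (-2 / 3 : ℝ) ≤ shellSum 2 L κ0 t κ (2 * κ) ∧
          shellSum 2 L κ0 t κ (2 * κ) ≤ c4 * χ * ε ^ (-1 / 3 : ℝ) * κ ^ (-2 / 3 : ℝ)) →
        (∀ κ, κfp ≤ κ → κ ≤ κβ →
          c5 * χ * η ^ (-1 / 3 : ℝ) ≤ shellSum 2 L κ0 t κ (2 * κ) ∧
          shellSum 2 L κ0 t κ (2 * κ) ≤ c6 * χ * η ^ (-1 / 3 : ℝ)) →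
        shellSumTop 2 L κ0 t κ0 ≤ c7 * (shellSum 2 L κ0 t κg κfm + shellSum 2 L κ0 t κfp κβ) →
        c ≤ kThetaSq 2 κ0 t * (a + b) ∧ kThetaSq 2 κ0 t * (a + b) ≤ C := by
  refine ⟨min (c2 ^ (-1 / 3 : ℝ)) 1 /
      (c7 * max (c4 / ((1 - 2 ^ (-2 / 3 : ℝ)) * (1 - 4 ^ (-2 / 3 : ℝ)))) (3 * c6 / (2 * log 2))),
    max (c1 ^ (-1 / 3 : ℝ)) 1 / min c3 (c5 / (2 * log 2)), by positivity, by positivity, ?_⟩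
  intro L μ ν ε η κg κfm κfp κ0 Sc κη κβ χ a b t hL hμ hν hε hη ht hκ0_def hSc hκη hκβ hχ ha hb
    h0g hgm hmp hpη h4g h4p hi hii hiii hiv
  have hκ0 : 0 < κ0 := by rw [hκ0_def]; positivity
  have hκg : 0 < κg := hκ0.trans_le h0g
  have hκfp : 0 < κfp := by linarith
  have hχpos : 0 < χ := hχ ▸ ht.chiRate_pos hL hκ0.ne' hμ
  have hΔ : 0 ≤ κg ^ (-2 / 3 : ℝ) - κfm ^ (-2 / 3 : ℝ) :=
    sub_nonneg.2 (Real.rpow_le_rpow_of_nonpos hκg hgm.le (by norm_num))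
  have hr : 0 < log (κβ / κfp) := Real.log_pos ((one_lt_div hκfp).2 (by linarith))
  have hs : 0 < χ * (ε ^ (-1 / 3 : ℝ) * (κg ^ (-2 / 3 : ℝ) - κfm ^ (-2 / 3 : ℝ)) +
      η ^ (-1 / 3 : ℝ) * log (κβ / κfp)) :=
    mul_pos hχpos (add_pos_of_nonneg_of_pos (mul_nonneg (by positivity) hΔ) (by positivity))
  have hweights := weights_comparable hc1 hc2 hμ hν hε hη
    (Real.log_pos ((one_lt_div hκfp).2 hpη)) hΔ hr.le hκη hκβ hSc hi
  have htotal := shellSumTop_comparable ht hL.le (by norm_num) hc3.le hc5.le hc7.le hχpos.le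
    (by positivity) (by positivity) hκg h0g h4g hmp h4p hii hiii hiv
  rw [kThetaSq_eq_chiRate_div ht hL.ne' hμ.ne' hκ0, ← hχ, ha, hb,
    show ∀ x, χ / (μ * shellSumTop 2 L κ0 t κ0) * x = χ * (x / μ) / shellSumTop 2 L κ0 t κ0 from
      fun x => by ring]
  exact div_comparable hs (by positivity) (by positivity)
    ⟨(mul_left_comm _ _ _).trans_le (mul_le_mul_of_nonneg_left hweights.1 hχpos.le),
      (mul_le_mul_of_nonneg_left hweights.2 hχpos.le).trans_eq (mul_left_comm _ _ _)⟩ htotal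

/-- Theorem 5.1 (first part): 2D, large Schmidt number. -/
theorem tracer_2D_large_Schmidt
    (c1 c2 c3 c4 c5 c6 c7 : ℝ)
    (hc1 : 0 < c1) (hc2 : 0 < c2) (hc3 : 0 < c3) (hc4 : 0 < c4)
    (hc5 : 0 < c5) (hc6 : 0 < c6) (hc7 : 0 < c7) :
    ∃ c C : ℝ, 0 < c ∧ 0 < C ∧
      ∀ (L μ ν ε η κg κfm κfp κ0 Sc κη κβ χ a b : ℝ) (t : (Fin 2 → ℤ) → ℝ),
        0 < L → 0 < μ → 0 < ν → 0 < ε → 0 < η →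
        IsTracerSpectrum 2 t →
        κ0 = 2 * π / L →
        Sc = ν / μ →
        κη = (η / ν ^ 3) ^ (1 / 6 : ℝ) →
        κβ = (η / μ ^ 3) ^ (1 / 6 : ℝ) →
        χ = chiRate 2 L κ0 μ t →
        a = κβ ^ (-4 / 3 : ℝ) * Sc ^ (-1 / 3 : ℝ)
              * (κg ^ (-2 / 3 : ℝ) - κfm ^ (-2 / 3 : ℝ))
              * (Real.log (κη / κfp)) ^ (-1 / 3 : ℝ) →
        b = κβ ^ (-2 : ℝ) * Real.log (κβ / κfp) →
        κ0 ≤ κg → κg < κfm → κfm ≤ κfp → κfp < κη →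
        4 * κg ≤ κfm → 4 * κfp ≤ κβ →
        (c1 * κη ^ 2 / Real.log (κη / κfp) ≤ η / ε ∧
          η / ε ≤ c2 * κη ^ 2 / Real.log (κη / κfp)) →
        (∀ κ, κg ≤ κ → κ ≤ κfm →
          c3 * χ * ε ^ (-1 / 3 : ℝ) * κ ^ (-2 / 3 : ℝ) ≤ shellSum 2 L κ0 t κ (2 * κ) ∧
          shellSum 2 L κ0 t κ (2 * κ) ≤ c4 * χ * ε ^ (-1 / 3 : ℝ) * κ ^ (-2 / 3 : ℝ)) →
        (∀ κ, κfp ≤ κ → κ ≤ κβ →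
          c5 * χ * η ^ (-1 / 3 : ℝ) ≤ shellSum 2 L κ0 t κ (2 * κ) ∧
          shellSum 2 L κ0 t κ (2 * κ) ≤ c6 * χ * η ^ (-1 / 3 : ℝ)) →
        shellSumTop 2 L κ0 t κ0 ≤ c7 * (shellSum 2 L κ0 t κg κfm + shellSum 2 L κ0 t κfp κβ) →
        c ≤ kThetaSq 2 κ0 t * (a + b) ∧ kThetaSq 2 κ0 t * (a + b) ≤ C :=
  tracer_2D_large_Schmidt_general c1 c2 c3 c4 c5 c6 c7 hc1 hc2 hc3 hc5 hc6 hc7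
end

section
/- Let 4/3 ≤ r ≤ 2 and c>0. Let κ0, κg, κf⁻, κf⁺, κ_η, Sc be positive reals with κ0 ≤ κg < κf⁻, κf⁺ < κ_η, Sc ≥ 1, and set κ_β = Sc^{1/2}·κ_η and Λ = ln(κ_η/κf⁺) > 0. If (κ_η/κ0)^{r−4/3} ≤ c·Sc^{1−r/2}·Λ^{1/3}·(Λ + ln Sc), then κ_β^{-4/3}·Sc^{-1/3}·(κg^{-2/3} − (κf⁻)^{-2/3})·Λ^{-1/3} ≤ 2c·κ_β^{-r}·κ0^{r−2}·ln(κ_β/κf⁺). (This is the key reduction, displayed as (5.17)–(5.18) ⇐ (5.19) in the proof of the second part of Theorem 5.1.) -/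
open Real

/-- The key reduction (5.17)–(5.18) ⇐ (5.19) in the proof of the second part of
Theorem 5.1. -/
theorem tracer_2D_key_reduction
    (r c κ0 κg κfm κfp κη Sc κβ Λ : ℝ)
    (hr1 : 4 / 3 ≤ r) (hr2 : r ≤ 2) (hc : 0 < c)
    (hκ0 : 0 < κ0) (hκg : 0 < κg) (hκfm : 0 < κfm) (hκfp : 0 < κfp)
    (hκη : 0 < κη) (hSc0 : 0 < Sc)
    (h0g : κ0 ≤ κg) (hgf : κg < κfm) (hfη : κfp < κη) (hSc : 1 ≤ Sc)
    (hκβ : κβ = Sc ^ (1 / 2 : ℝ) * κη)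
    (hΛ : Λ = Real.log (κη / κfp)) (hΛpos : 0 < Λ)
    (hmain : (κη / κ0) ^ (r - 4 / 3) ≤
      c * Sc ^ (1 - r / 2) * Λ ^ (1 / 3 : ℝ) * (Λ + Real.log Sc)) :
    κβ ^ (-4 / 3 : ℝ) * Sc ^ (-1 / 3 : ℝ)
        * (κg ^ (-2 / 3 : ℝ) - κfm ^ (-2 / 3 : ℝ)) * Λ ^ (-1 / 3 : ℝ) ≤
      2 * c * κβ ^ (-r) * κ0 ^ (r - 2) * Real.log (κβ / κfp) := by
  have hκβpos : 0 < κβ := by rw [hκβ]; positivity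
  have hlogSc : 0 ≤ Real.log Sc := Real.log_nonneg hSc
  -- Step 1: bound the difference by κ0^{-2/3}
  have hdiff : κg ^ (-2 / 3 : ℝ) - κfm ^ (-2 / 3 : ℝ) ≤ κ0 ^ (-2 / 3 : ℝ) := by
    have h1 : κg ^ (-2 / 3 : ℝ) ≤ κ0 ^ (-2 / 3 : ℝ) :=
      Real.rpow_le_rpow_of_nonpos hκ0 h0g (by norm_num)
    have h2 : 0 ≤ κfm ^ (-2 / 3 : ℝ) := Real.rpow_nonneg hκfm.le _
    linarith
  -- Step 2: the key rescaled inequality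
  have hA : (κβ / κ0) ^ (r - 4 / 3) ≤
      c * Sc ^ (1 / 3 : ℝ) * Λ ^ (1 / 3 : ℝ) * (Λ + Real.log Sc) := by
    have hβ0 : κβ / κ0 = Sc ^ (1 / 2 : ℝ) * (κη / κ0) := by
      rw [hκβ]; ring
    rw [hβ0, Real.mul_rpow (Real.rpow_nonneg hSc0.le _) (by positivity),
      ← Real.rpow_mul hSc0.le]
    have hSpos : (0:ℝ) < Sc ^ (1 / 2 * (r - 4 / 3)) := Real.rpow_pos_of_pos hSc0 _
    calc Sc ^ (1 / 2 * (r - 4 / 3)) * (κη / κ0) ^ (r - 4 / 3)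
        ≤ Sc ^ (1 / 2 * (r - 4 / 3)) *
          (c * Sc ^ (1 - r / 2) * Λ ^ (1 / 3 : ℝ) * (Λ + Real.log Sc)) :=
          mul_le_mul_of_nonneg_left hmain hSpos.le
      _ = c * (Sc ^ (1 / 2 * (r - 4 / 3)) * Sc ^ (1 - r / 2)) *
            Λ ^ (1 / 3 : ℝ) * (Λ + Real.log Sc) := by ring
      _ = c * Sc ^ (1 / 3 : ℝ) * Λ ^ (1 / 3 : ℝ) * (Λ + Real.log Sc) := by
          rw [← Real.rpow_add hSc0,
            show 1 / 2 * (r - 4 / 3) + (1 - r / 2) = (1 / 3 : ℝ) by ring]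
  -- Step 3: multiply by P
  set P : ℝ := κβ ^ (-r) * κ0 ^ (r - 2) * Sc ^ (-1 / 3 : ℝ) * Λ ^ (-1 / 3 : ℝ) with hP
  have hPpos : 0 < P := by
    have h1 := Real.rpow_pos_of_pos hκβpos (-r)
    have h2 := Real.rpow_pos_of_pos hκ0 (r - 2)
    have h3 := Real.rpow_pos_of_pos hSc0 (-1 / 3 : ℝ)
    have h4 := Real.rpow_pos_of_pos hΛpos (-1 / 3 : ℝ)
    rw [hP]; positivity
  have e1 : (κβ / κ0) ^ (r - 4 / 3) * P =
      κβ ^ (-4 / 3 : ℝ) * Sc ^ (-1 / 3 : ℝ) * κ0 ^ (-2 / 3 : ℝ) * Λ ^ (-1 / 3 : ℝ) := by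
    rw [hP, Real.div_rpow hκβpos.le hκ0.le, div_eq_mul_inv,
      ← Real.rpow_neg hκ0.le,
      show (-4 / 3 : ℝ) = (r - 4 / 3) + (-r) by ring,
      show (-2 / 3 : ℝ) = (-(r - 4 / 3)) + (r - 2) by ring,
      Real.rpow_add hκβpos, Real.rpow_add hκ0]
    ring
  have e2 : c * Sc ^ (1 / 3 : ℝ) * Λ ^ (1 / 3 : ℝ) * (Λ + Real.log Sc) * P =
      c * κβ ^ (-r) * κ0 ^ (r - 2) * (Λ + Real.log Sc) := by
    have hS : Sc ^ (1 / 3 : ℝ) * Sc ^ (-1 / 3 : ℝ) = 1 := by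
      rw [← Real.rpow_add hSc0]; norm_num
    have hL : Λ ^ (1 / 3 : ℝ) * Λ ^ (-1 / 3 : ℝ) = 1 := by
      rw [← Real.rpow_add hΛpos]; norm_num
    rw [hP]
    calc c * Sc ^ (1 / 3 : ℝ) * Λ ^ (1 / 3 : ℝ) * (Λ + Real.log Sc) *
          (κβ ^ (-r) * κ0 ^ (r - 2) * Sc ^ (-1 / 3 : ℝ) * Λ ^ (-1 / 3 : ℝ))
        = c * κβ ^ (-r) * κ0 ^ (r - 2) * (Λ + Real.log Sc) *
            ((Sc ^ (1 / 3 : ℝ) * Sc ^ (-1 / 3 : ℝ)) * (Λ ^ (1 / 3 : ℝ) * Λ ^ (-1 / 3 : ℝ))) := by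
          ring
      _ = c * κβ ^ (-r) * κ0 ^ (r - 2) * (Λ + Real.log Sc) := by
          rw [hS, hL, mul_one, mul_one]
  have hmid : κβ ^ (-4 / 3 : ℝ) * Sc ^ (-1 / 3 : ℝ) * κ0 ^ (-2 / 3 : ℝ) * Λ ^ (-1 / 3 : ℝ) ≤
      c * κβ ^ (-r) * κ0 ^ (r - 2) * (Λ + Real.log Sc) := by
    rw [← e1, ← e2]
    exact mul_le_mul_of_nonneg_right hA hPpos.le
  -- Step 4: log identity
  have hlog : Real.log (κβ / κfp) = 1 / 2 * Real.log Sc + Λ := by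
    rw [hκβ, hΛ, Real.log_div (by positivity) hκfp.ne',
      Real.log_mul (by positivity) hκη.ne', Real.log_rpow hSc0,
      Real.log_div hκη.ne' hκfp.ne']
    ring
  -- Combine
  have hQpos : 0 < κβ ^ (-r) * κ0 ^ (r - 2) := by
    have h1 := Real.rpow_pos_of_pos hκβpos (-r)
    have h2 := Real.rpow_pos_of_pos hκ0 (r - 2)
    positivity
  have hAB : 0 ≤ κβ ^ (-4 / 3 : ℝ) * Sc ^ (-1 / 3 : ℝ) := by positivity
  have hB : 0 ≤ Λ ^ (-1 / 3 : ℝ) := Real.rpow_nonneg hΛpos.le _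
  calc κβ ^ (-4 / 3 : ℝ) * Sc ^ (-1 / 3 : ℝ)
        * (κg ^ (-2 / 3 : ℝ) - κfm ^ (-2 / 3 : ℝ)) * Λ ^ (-1 / 3 : ℝ)
      ≤ κβ ^ (-4 / 3 : ℝ) * Sc ^ (-1 / 3 : ℝ) * κ0 ^ (-2 / 3 : ℝ) * Λ ^ (-1 / 3 : ℝ) :=
        mul_le_mul_of_nonneg_right (mul_le_mul_of_nonneg_left hdiff hAB) hB
    _ ≤ c * κβ ^ (-r) * κ0 ^ (r - 2) * (Λ + Real.log Sc) := hmid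
    _ ≤ 2 * c * κβ ^ (-r) * κ0 ^ (r - 2) * Real.log (κβ / κfp) := by
        rw [hlog]
        nlinarith [mul_pos hc hQpos, mul_pos (mul_pos hc hQpos) hΛpos]
end

section
/- Let t be a tracer spectrum (2D framework) with associated dissipation rate χ and wavenumber κ_θ, let μ,η>0, set κ_β=(η/μ³)^{1/6}, and let c>0. If κ_θ² ≥ c·κ_β², then for every κ>0 the dyadic shell sum satisfies 𝐭_{κ,2κ} ≤ (1/c)·χ·η^{-1/3}. (Theorem 5.2 of the paper, the partial converse to the tracer power law.) -/
open Real

/-! Since `χ = μ L⁻² κ_θ² Σ_k t(k)`, the lower bound `κ_θ² ≥ c κ_β² = c η^{1/3} / μ` bounds the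
total mass `L⁻² Σ_k t(k)`, and hence every shell, by `χ / (c η^{1/3})`. -/

namespace IsTracerSpectrum

variable {d : ℕ} {t : (Fin d → ℤ) → ℝ}

theorem summable_self (ht : IsTracerSpectrum d t) : Summable t :=
  ht.summable.of_nonneg_of_le ht.nonneg fun k => by
    nlinarith [ht.nonneg k, sq_nonneg (knorm k)]

theorem tsum_pos (ht : IsTracerSpectrum d t) : 0 < ∑' k, t k := by
  obtain ⟨k, hk⟩ := ht.exists_ne_zero
  exact ht.summable_self.tsum_pos ht.nonneg k ((ht.nonneg k).lt_of_ne' hk)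

theorem shellSum_le (ht : IsTracerSpectrum d t) {L : ℝ} (hL : 0 ≤ L) (κ0 κ1 κ2 : ℝ) :
    shellSum d L κ0 t κ1 κ2 ≤ L ^ (-(d : ℤ)) * ∑' k, t k := by
  have hle : ∀ k, (if κ1 ≤ κ0 * knorm k ∧ κ0 * knorm k < κ2 then t k else 0) ≤ t k :=
    fun k => by split_ifs <;> simp [ht.nonneg k]
  have hnn : ∀ k, 0 ≤ (if κ1 ≤ κ0 * knorm k ∧ κ0 * knorm k < κ2 then t k else 0) :=
    fun k => by split_ifs <;> simp [ht.nonneg k]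
  exact mul_le_mul_of_nonneg_left
    ((ht.summable_self.of_nonneg_of_le hnn hle).tsum_le_tsum hle ht.summable_self)
    (zpow_nonneg hL _)

theorem chiRate_eq (ht : IsTracerSpectrum d t) (L κ0 μ : ℝ) :
    chiRate d L κ0 μ t = μ * L ^ (-(d : ℤ)) * (kThetaSq d κ0 t * ∑' k, t k) := by
  rw [chiRate, kThetaSq, div_mul_cancel₀ _ ht.tsum_pos.ne']
  ring

theorem shellSum_le_chiRate_div (ht : IsTracerSpectrum d t) {L μ a : ℝ} (hL : 0 ≤ L)
    (hμ : 0 < μ) (ha : 0 < a) {κ0 : ℝ} (h : a ≤ kThetaSq d κ0 t) (κ1 κ2 : ℝ) :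
    shellSum d L κ0 t κ1 κ2 ≤ chiRate d L κ0 μ t / (μ * a) := by
  have hT : 0 ≤ ∑' k, t k := ht.tsum_pos.le
  calc shellSum d L κ0 t κ1 κ2
      ≤ L ^ (-(d : ℤ)) * ∑' k, t k := ht.shellSum_le hL κ0 κ1 κ2
    _ = μ * L ^ (-(d : ℤ)) * (a * ∑' k, t k) / (μ * a) := by field_simp
    _ ≤ chiRate d L κ0 μ t / (μ * a) := by
      rw [ht.chiRate_eq]
      gcongr

end IsTracerSpectrum

theorem mul_sq_rpow_one_div_six {η μ : ℝ} (hη : 0 ≤ η) (hμ : 0 < μ) :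
    μ * ((η / μ ^ 3) ^ (1 / 6 : ℝ)) ^ 2 = η ^ (1 / 3 : ℝ) := by
  rw [← Real.rpow_two, ← Real.rpow_mul (by positivity), Real.div_rpow hη (by positivity),
    ← Real.rpow_natCast μ 3, ← Real.rpow_mul hμ.le]
  norm_num
  field_simp

theorem tracer_2D_partial_converse_general
    (L μ η c κ0 κβ : ℝ) (t : (Fin 2 → ℤ) → ℝ)
    (hL : 0 < L) (hμ : 0 < μ) (hη : 0 < η) (hc : 0 < c)
    (ht : IsTracerSpectrum 2 t)
    (hκβ : κβ = (η / μ ^ 3) ^ (1 / 6 : ℝ))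
    (h : c * κβ ^ 2 ≤ kThetaSq 2 κ0 t) :
    ∀ κ : ℝ, 0 < κ →
      shellSum 2 L κ0 t κ (2 * κ) ≤ (1 / c) * chiRate 2 L κ0 μ t * η ^ (-1 / 3 : ℝ) := by
  intro κ _
  have hκβ_pos : 0 < κβ := hκβ ▸ by positivity
  have hμcκβ : μ * (c * κβ ^ 2) = c * η ^ (1 / 3 : ℝ) := by
    rw [hκβ, ← mul_sq_rpow_one_div_six hη.le hμ]
    ring
  calc shellSum 2 L κ0 t κ (2 * κ)
      ≤ chiRate 2 L κ0 μ t / (μ * (c * κβ ^ 2)) :=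
        ht.shellSum_le_chiRate_div hL.le hμ (mul_pos hc (pow_pos hκβ_pos 2)) h κ (2 * κ)
    _ = (1 / c) * chiRate 2 L κ0 μ t * η ^ (-1 / 3 : ℝ) := by
      rw [hμcκβ, neg_div, Real.rpow_neg hη.le]
      ring

/-- Theorem 5.2: if `κ_θ² ≥ c κ_β²` then every dyadic shell sum satisfies
`𝐭_{κ,2κ} ≤ (1/c) χ η^{-1/3}`. -/
theorem tracer_2D_partial_converse
    (L μ η c κ0 κβ : ℝ) (t : (Fin 2 → ℤ) → ℝ)
    (hL : 0 < L) (hμ : 0 < μ) (hη : 0 < η) (hc : 0 < c)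
    (ht : IsTracerSpectrum 2 t)
    (hκ0 : κ0 = 2 * π / L)
    (hκβ : κβ = (η / μ ^ 3) ^ (1 / 6 : ℝ))
    (h : c * κβ ^ 2 ≤ kThetaSq 2 κ0 t) :
    ∀ κ : ℝ, 0 < κ →
      shellSum 2 L κ0 t κ (2 * κ) ≤ (1 / c) * chiRate 2 L κ0 μ t * η ^ (-1 / 3 : ℝ) :=
  tracer_2D_partial_converse_general L μ η c κ0 κβ t hL hμ hη hc ht hκβ h
end

section
/- Let 4/3 ≤ r < 2 and c2>0. There exists C>0, depending only on r and c2, such that for all positive reals κ0, κg, κf⁺, κ_ε, Sc, G with κ0 ≤ κg < κ_ε, κ0 ≤ κf⁺, G ≥ 1, Sc ≥ e, Sc ≥ G^{(3r−4)/(8−4r)}, κ_ε ≤ c2·κ0·(κ0/κf⁺)^{1/8}·G^{3/8}, and κ'_β = Sc^{1/2}·κ_ε, one has (κ'_β)^{-4/3}·Sc^{-1/3}·(κg^{-2/3} − κ_ε^{-2/3}) ≤ C·(κ'_β)^{-r}·κ0^{r−2}·ln Sc. (The key inequality in the proof of the second part of Theorem 6.1.) -/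
open Real

/-! The bound on κ_ε gives κ'_β / κ0 ≤ c2 Sc^{1/2} G^{3/8}, and the hypothesis on Sc turns the
Grashof factor into a power of Sc: (G^{3/8})^{r-4/3} ≤ Sc^{(2-r)/2}. Hence
(κ'_β / κ0)^{r-4/3} ≤ c2^{r-4/3} Sc^{1/3}, which exactly absorbs the Sc^{-1/3} on the left once
κg^{-2/3} - κ_ε^{-2/3} is bounded by κ0^{-2/3}; finally ln Sc ≥ 1. So C = c2^{r-4/3} works. -/

lemma rpow_sub_rpow_le_rpow_of_le {a b c p : ℝ} (ha : 0 < a) (hab : a ≤ b) (hc : 0 ≤ c)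
    (hp : p ≤ 0) : b ^ p - c ^ p ≤ a ^ p := by
  have hba : b ^ p ≤ a ^ p := rpow_le_rpow_of_nonpos ha hab hp
  have hcp : 0 ≤ c ^ p := rpow_nonneg hc p
  linarith

lemma rpow_neg_mul_rpow_sub_two_mul_div_rpow {a b : ℝ} (ha : 0 < a) (hb : 0 < b) (p q : ℝ) :
    a ^ (-p) * b ^ (p - 2) * (a / b) ^ (p - q) = a ^ (-q) * b ^ (q - 2) := by
  rw [div_rpow ha.le hb.le, div_eq_mul_inv, ← rpow_neg hb.le]
  calc a ^ (-p) * b ^ (p - 2) * (a ^ (p - q) * b ^ (-(p - q)))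
      = (a ^ (-p) * a ^ (p - q)) * (b ^ (p - 2) * b ^ (-(p - q))) := by ring
    _ = a ^ (-q) * b ^ (q - 2) := by
      rw [← rpow_add ha, ← rpow_add hb]
      ring_nf

lemma div_le_mul_rpow_mul_rpow {κβ κε κ0 κf c G S : ℝ} (hκ0 : 0 < κ0) (hκf : 0 < κf)
    (hc : 0 ≤ c) (hG : 0 ≤ G) (hS : 0 ≤ S) (h0f : κ0 ≤ κf)
    (hκε : κε ≤ c * κ0 * (κ0 / κf) ^ (1 / 8 : ℝ) * G ^ (3 / 8 : ℝ))
    (hκβ : κβ = S ^ (1 / 2 : ℝ) * κε) :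
    κβ / κ0 ≤ c * S ^ (1 / 2 : ℝ) * G ^ (3 / 8 : ℝ) := by
  have hratio : (κ0 / κf) ^ (1 / 8 : ℝ) ≤ 1 :=
    rpow_le_one (by positivity) (div_le_one_of_le₀ h0f hκf.le) (by norm_num)
  have hκε' : κε ≤ c * κ0 * 1 * G ^ (3 / 8 : ℝ) := hκε.trans (by gcongr)
  rw [div_le_iff₀ hκ0, hκβ]
  calc S ^ (1 / 2 : ℝ) * κε ≤ S ^ (1 / 2 : ℝ) * (c * κ0 * 1 * G ^ (3 / 8 : ℝ)) := by gcongr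
    _ = c * S ^ (1 / 2 : ℝ) * G ^ (3 / 8 : ℝ) * κ0 := by ring

lemma rpow_le_rpow_of_grashof_le {r G S : ℝ} (hr2 : r < 2) (hG : 0 ≤ G)
    (hGS : G ^ ((3 * r - 4) / (8 - 4 * r)) ≤ S) :
    (G ^ (3 / 8 : ℝ)) ^ (r - 4 / 3) ≤ S ^ ((2 - r) / 2) := by
  have hexp : (3 / 8 : ℝ) * (r - 4 / 3) = (3 * r - 4) / (8 - 4 * r) * ((2 - r) / 2) := by
    rw [div_mul_div_comm, eq_div_iff (by nlinarith)]
    ring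
  rw [← rpow_mul hG, hexp, rpow_mul hG]
  exact rpow_le_rpow (rpow_nonneg hG _) hGS (by linarith)

lemma rpow_le_of_le_mul_grashof {r c G S x : ℝ} (hr1 : 4 / 3 ≤ r) (hr2 : r < 2) (hc : 0 ≤ c)
    (hG : 0 ≤ G) (hS : 0 < S) (hGS : G ^ ((3 * r - 4) / (8 - 4 * r)) ≤ S) (hx : 0 ≤ x)
    (hxb : x ≤ c * S ^ (1 / 2 : ℝ) * G ^ (3 / 8 : ℝ)) :
    x ^ (r - 4 / 3) ≤ c ^ (r - 4 / 3) * S ^ (1 / 3 : ℝ) := by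
  have ht : 0 ≤ r - 4 / 3 := by linarith
  calc x ^ (r - 4 / 3) ≤ (c * S ^ (1 / 2 : ℝ) * G ^ (3 / 8 : ℝ)) ^ (r - 4 / 3) :=
        rpow_le_rpow hx hxb ht
    _ = c ^ (r - 4 / 3) * S ^ ((r - 4 / 3) / 2) * (G ^ (3 / 8 : ℝ)) ^ (r - 4 / 3) := by
        rw [mul_rpow (by positivity) (by positivity), mul_rpow hc (by positivity),
          ← rpow_mul hS.le]
        ring_nf
    _ ≤ c ^ (r - 4 / 3) * S ^ ((r - 4 / 3) / 2) * S ^ ((2 - r) / 2) := by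
        gcongr
        exact rpow_le_rpow_of_grashof_le hr2 hG hGS
    _ = c ^ (r - 4 / 3) * S ^ (1 / 3 : ℝ) := by
        rw [mul_assoc, ← rpow_add hS]
        ring_nf

/-- The key inequality in the proof of the second part of Theorem 6.1. -/
theorem tracer_3D_key_inequality
    (r c2 : ℝ) (hr1 : 4 / 3 ≤ r) (hr2 : r < 2) (hc2 : 0 < c2) :
    ∃ C : ℝ, 0 < C ∧
      ∀ κ0 κg κfp κε Sc G κβ' : ℝ,
        0 < κ0 → 0 < κg → 0 < κfp → 0 < κε → 0 < Sc → 0 < G →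
        κ0 ≤ κg → κg < κε → κ0 ≤ κfp →
        1 ≤ G → Real.exp 1 ≤ Sc →
        G ^ ((3 * r - 4) / (8 - 4 * r)) ≤ Sc →
        κε ≤ c2 * κ0 * (κ0 / κfp) ^ (1 / 8 : ℝ) * G ^ (3 / 8 : ℝ) →
        κβ' = Sc ^ (1 / 2 : ℝ) * κε →
        κβ' ^ (-4 / 3 : ℝ) * Sc ^ (-1 / 3 : ℝ) * (κg ^ (-2 / 3 : ℝ) - κε ^ (-2 / 3 : ℝ)) ≤
          C * κβ' ^ (-r) * κ0 ^ (r - 2) * Real.log Sc := by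
  refine ⟨c2 ^ (r - 4 / 3), rpow_pos_of_pos hc2 _, ?_⟩
  intro κ0 κg κfp κε Sc G κβ' h0 _ hfp hε hSc hG h0g _ h0fp _ heSc hGSc hεb hβ
  have hβpos : 0 < κβ' := hβ ▸ mul_pos (rpow_pos_of_pos hSc _) hε
  have hratio := rpow_le_of_le_mul_grashof hr1 hr2 hc2.le hG.le hSc hGSc (by positivity)
    (div_le_mul_rpow_mul_rpow h0 hfp hc2.le hG.le hSc.le h0fp hεb hβ)
  have hlog : 1 ≤ log Sc := (le_log_iff_exp_le hSc).mpr heSc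
  set C := c2 ^ (r - 4 / 3)
  calc κβ' ^ (-4 / 3 : ℝ) * Sc ^ (-1 / 3 : ℝ) * (κg ^ (-2 / 3 : ℝ) - κε ^ (-2 / 3 : ℝ))
      ≤ κβ' ^ (-4 / 3 : ℝ) * Sc ^ (-1 / 3 : ℝ) * κ0 ^ (-2 / 3 : ℝ) := by
        gcongr
        exact rpow_sub_rpow_le_rpow_of_le h0 h0g hε.le (by norm_num)
    _ = κβ' ^ (-r) * κ0 ^ (r - 2) * (κβ' / κ0) ^ (r - 4 / 3) * Sc ^ (-1 / 3 : ℝ) := by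
        rw [rpow_neg_mul_rpow_sub_two_mul_div_rpow hβpos h0]
        ring_nf
    _ ≤ κβ' ^ (-r) * κ0 ^ (r - 2) * (C * Sc ^ (1 / 3 : ℝ)) * Sc ^ (-1 / 3 : ℝ) := by gcongr
    _ = C * κβ' ^ (-r) * κ0 ^ (r - 2) := by
        rw [mul_assoc, mul_assoc C, ← rpow_add hSc]
        norm_num
        ring
    _ ≤ C * κβ' ^ (-r) * κ0 ^ (r - 2) * log Sc := le_mul_of_one_le_right (by positivity) hlog
end

section
/- Let 4/3 ≤ r < 2 and fix constants c0,c1,…,c6>0. There exist constants c,C>0 depending only on r and c0,…,c6 with the following property. Let μ,ν>0 with Sc=ν/μ, ε>0, κ_ε=(ε/ν³)^{1/4}, κ'_β=Sc^{1/2}·κ_ε, G ≥ 1, and let t be a tracer spectrum (3D framework) with shell sums 𝐭, dissipation rate χ and wavenumber κ_θ. Assume: κ0 ≤ κg ≤ c0·κ0; 4κg ≤ κ_ε; κ0 ≤ κf⁺; Sc ≥ 16 and Sc ≥ e and Sc ≥ G^{(3r−4)/(8−4r)}; κ_ε ≤ c6·κ0·(κ0/κf⁺)^{1/8}·G^{3/8};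 for every κ∈[κg,κ_ε], c1·χ·ε^{-1/3}·κ^{-2/3} ≤ 𝐭_{κ,2κ} ≤ c2·χ·ε^{-1/3}·κ^{-2/3}; for every κ∈[κ_ε,κ'_β], c3·χ·(ν/ε)^{1/2} ≤ 𝐭_{κ,2κ} ≤ c4·χ·(ν/ε)^{1/2}; and 𝐭_{κ0,∞} ≤ c5·𝐭_{κg,κ'_β}. Then c·(κ'_β)^{r}·κ0^{2−r}/ln Sc ≤ κ_θ² ≤ C·(κ'_β)²/ln Sc. (Conclusion (6.6) of Theorem 6.1.) -/
open Real

lemma knorm_nonneg {d : ℕ} (k : Fin d → ℤ) : 0 ≤ knorm k := Real.sqrt_nonneg _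

lemma knorm_sq_eq {d : ℕ} (k : Fin d → ℤ) : knorm k ^ 2 = ∑ i, ((k i : ℝ)) ^ 2 :=
  Real.sq_sqrt (by positivity)

/-- At most one index satisfies a family of mutually exclusive predicates. -/
lemma sum_ite_excl_le {N : ℕ} (P : ℕ → Prop) [DecidablePred P]
    (hP : ∀ i j, i < j → P i → P j → False) {a : ℝ} (ha : 0 ≤ a) :
    (∑ j ∈ Finset.range N, if P j then a else 0) ≤ a := by
  by_cases h : ∃ j ∈ Finset.range N, P j
  · obtain ⟨j0, hj0, hPj0⟩ := h
    rw [Finset.sum_eq_single_of_mem j0 hj0 (fun b hb hne => by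
      rw [if_neg]
      intro hPb
      rcases lt_or_gt_of_ne hne with h' | h'
      · exact hP b j0 h' hPb hPj0
      · exact hP j0 b h' hPj0 hPb)]
    simp [hPj0]
  · push_neg at h
    rw [Finset.sum_eq_zero (fun j hj => if_neg (h j hj))]
    exact ha

set_option maxHeartbeats 1000000 in
/-- Theorem 6.1 (conclusion (6.6)): 3D, large Schmidt number, wide tracer cascade. -/
theorem tracer_3D_large_Schmidt_wide_cascade
    (r c0 c1 c2 c3 c4 c5 c6 : ℝ)
    (hr1 : 4 / 3 ≤ r) (hr2 : r < 2)
    (hc0 : 0 < c0) (hc1 : 0 < c1) (hc2 : 0 < c2) (hc3 : 0 < c3)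
    (hc4 : 0 < c4) (hc5 : 0 < c5) (hc6 : 0 < c6) :
    ∃ c C : ℝ, 0 < c ∧ 0 < C ∧
      ∀ (L μ ν ε κg κfp κ0 Sc κε κβ' χ G : ℝ) (t : (Fin 3 → ℤ) → ℝ),
        0 < L → 0 < μ → 0 < ν → 0 < ε →
        IsTracerSpectrum 3 t →
        κ0 = 2 * π / L →
        Sc = ν / μ →
        κε = (ε / ν ^ 3) ^ (1 / 4 : ℝ) →
        κβ' = Sc ^ (1 / 2 : ℝ) * κε →
        χ = chiRate 3 L κ0 μ t →
        1 ≤ G →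
        κ0 ≤ κg → κg ≤ c0 * κ0 → 4 * κg ≤ κε → κ0 ≤ κfp →
        16 ≤ Sc → Real.exp 1 ≤ Sc →
        G ^ ((3 * r - 4) / (8 - 4 * r)) ≤ Sc →
        κε ≤ c6 * κ0 * (κ0 / κfp) ^ (1 / 8 : ℝ) * G ^ (3 / 8 : ℝ) →
        (∀ κ, κg ≤ κ → κ ≤ κε →
          c1 * χ * ε ^ (-1 / 3 : ℝ) * κ ^ (-2 / 3 : ℝ) ≤ shellSum 3 L κ0 t κ (2 * κ) ∧
          shellSum 3 L κ0 t κ (2 * κ) ≤ c2 * χ * ε ^ (-1 / 3 : ℝ) * κ ^ (-2 / 3 : ℝ)) →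
        (∀ κ, κε ≤ κ → κ ≤ κβ' →
          c3 * χ * (ν / ε) ^ (1 / 2 : ℝ) ≤ shellSum 3 L κ0 t κ (2 * κ) ∧
          shellSum 3 L κ0 t κ (2 * κ) ≤ c4 * χ * (ν / ε) ^ (1 / 2 : ℝ)) →
        shellSumTop 3 L κ0 t κ0 ≤ c5 * shellSum 3 L κ0 t κg κβ' →
        c * κβ' ^ r * κ0 ^ (2 - r) / Real.log Sc ≤ kThetaSq 3 κ0 t ∧
          kThetaSq 3 κ0 t ≤ C * κβ' ^ (2 : ℝ) / Real.log Sc := by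
  refine ⟨(c5 * (3 * c2 * c6 ^ (r - 4/3 : ℝ) + 2 * c4))⁻¹, 4 / c3,
    by positivity, by positivity, ?_⟩
  intro L μ ν ε κg κfp κ0 Sc κε κβ' χ G t hL hμ hν hε ht hκ0 hSceq hκεeq hκβeq hχeq hG
    hκ0g hκgc0 h4κg hκ0fp hSc16 hSce hGSc hκεbd hIn hDi hTop
  -- basic positivity
  have hκ0pos : 0 < κ0 := by rw [hκ0]; positivity
  have hScpos : 0 < Sc := by rw [hSceq]; positivity
  have hSc1 : 1 < Sc := by linarith
  have hκεpos : 0 < κε := by rw [hκεeq]; positivity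
  have hκβpos : 0 < κβ' := by rw [hκβeq]; positivity
  have hlnSc : 1 ≤ Real.log Sc := (Real.le_log_iff_exp_le hScpos).mpr hSce
  have hlnScpos : 0 < Real.log Sc := lt_of_lt_of_le one_pos hlnSc
  have hκεβ : κε ≤ κβ' := by
    rw [hκβeq]
    have h1 : (1:ℝ) ≤ Sc ^ (1/2:ℝ) := Real.one_le_rpow hSc1.le (by norm_num)
    nlinarith
  have hκgε : κg ≤ κε := by linarith
  have hκ0β : κ0 ≤ κβ' := by linarith
  have hκgpos : 0 < κg := lt_of_lt_of_le hκ0pos hκ0g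
  -- the L^{-3} factor
  set W : ℝ := L ^ (-((3:ℕ) : ℤ)) with hW
  have hWpos : 0 < W := by rw [hW]; positivity
  -- sums
  set A : ℝ := ∑' k : Fin 3 → ℤ, knorm k ^ 2 * t k with hA
  set B : ℝ := ∑' k : Fin 3 → ℤ, t k with hB
  have hsumt : Summable t :=
    ht.summable.of_nonneg_of_le (fun k => ht.nonneg k)
      (fun k => by nlinarith [ht.nonneg k, sq_nonneg (knorm k)])
  have hsumA : Summable (fun k : Fin 3 → ℤ => knorm k ^ 2 * t k) :=
    ht.summable.of_nonneg_of_le (fun k => mul_nonneg (by positivity) (ht.nonneg k))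
      (fun k => by nlinarith [ht.nonneg k])
  have hsumIte : ∀ (κ1 κ2 : ℝ),
      Summable (fun k : Fin 3 → ℤ =>
        if κ1 ≤ κ0 * knorm k ∧ κ0 * knorm k < κ2 then t k else 0) := by
    intro κ1 κ2
    refine hsumt.of_nonneg_of_le (fun k => ?_) (fun k => ?_)
    · split_ifs; exacts [ht.nonneg k, le_refl 0]
    · split_ifs; exacts [le_refl _, ht.nonneg k]
  obtain ⟨k0, hk0⟩ := ht.exists_ne_zero
  have hk0ne : k0 ≠ 0 := fun h => hk0 (h ▸ ht.map_zero)
  have htk0pos : 0 < t k0 := lt_of_le_of_ne (ht.nonneg k0) (Ne.symm hk0)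
  have hBpos : 0 < B := Summable.tsum_pos hsumt ht.nonneg k0 htk0pos
  have hApos : 0 < A := by
    refine Summable.tsum_pos hsumA (fun k => mul_nonneg (by positivity) (ht.nonneg k)) k0 ?_
    have h1 := one_le_knorm hk0ne
    have h2 : 0 < knorm k0 ^ 2 := by nlinarith only [h1]
    exact mul_pos h2 htk0pos
  have hχ : χ = μ * W * κ0 ^ 2 * A := by rw [hχeq, chiRate, hW, hA]
  have hχpos : 0 < χ := by rw [hχ]; positivity
  have hkθ : kThetaSq 3 κ0 t = κ0 ^ 2 * A / B := by rw [kThetaSq, hA, hB]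
  -- `shellSumTop κ0` counts everything
  have hTopEq : shellSumTop 3 L κ0 t κ0 = W * B := by
    rw [shellSumTop, hB]
    congr 1
    apply tsum_congr
    intro k
    by_cases hk : k = 0
    · subst hk
      have hkn : knorm (0 : Fin 3 → ℤ) = 0 := by simp [knorm]
      rw [hkn, if_neg (by rw [mul_zero]; exact not_le.mpr hκ0pos), ht.map_zero]
    · rw [if_pos (by nlinarith only [one_le_knorm hk, hκ0pos])]
  -- disjoint dyadic shells undercount the total
  have key1 : ∀ a : ℝ, 0 < a → ∀ N : ℕ,
      (∑ j ∈ Finset.range N, ∑' k : Fin 3 → ℤ,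
        (if a * 2 ^ j ≤ κ0 * knorm k ∧ κ0 * knorm k < 2 * (a * 2 ^ j) then t k else 0)) ≤ B := by
    intro a ha N
    rw [← Summable.tsum_finsetSum (fun j _ => hsumIte _ _)]
    refine Summable.tsum_le_tsum (fun k => ?_) (summable_sum (fun j _ => hsumIte _ _)) hsumt
    refine sum_ite_excl_le _ (fun i j hij hi hj => ?_) (ht.nonneg k)
    have h2 : (2:ℝ) ^ (i+1) ≤ (2:ℝ) ^ j := pow_le_pow_right₀ (by norm_num) (by omega)
    have h4 : a * 2 ^ (i+1) ≤ a * 2 ^ j := mul_le_mul_of_nonneg_left h2 ha.le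
    rw [pow_succ] at h4
    linarith only [h4, hi.2, hj.1]
  -- dyadic cover of [κg, κβ')
  set Mβ : ℕ := (Int.log 2 (κβ' / κg)).toNat + 1 with hMβ
  have hβg1 : (1:ℝ) ≤ κβ' / κg := by rw [le_div_iff₀ hκgpos]; linarith
  have hlogβ0 : 0 ≤ Int.log 2 (κβ' / κg) := by
    rw [← Int.zpow_le_iff_le_log (by norm_num) (by positivity)]
    simpa using hβg1
  have hMβupper : ∀ j : ℕ, j < Mβ → κg * 2 ^ j ≤ κβ' := by
    intro j hj
    have hj' : (j:ℤ) ≤ Int.log 2 (κβ' / κg) := by omega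
    have h2 : (2:ℝ)^(j:ℤ) ≤ (2:ℝ)^(Int.log 2 (κβ'/κg)) :=
      zpow_le_zpow_right₀ one_le_two hj'
    have h3 := Int.zpow_log_le_self (b := 2) (by norm_num)
      (show (0:ℝ) < κβ'/κg by positivity)
    push_cast at h3
    rw [zpow_natCast] at h2
    have : (2:ℝ)^j ≤ κβ'/κg := le_trans h2 h3
    calc κg * 2 ^ j ≤ κg * (κβ'/κg) := mul_le_mul_of_nonneg_left this hκgpos.le
    _ = κβ' := by field_simp
  have hMβcover : κβ' < κg * 2 ^ Mβ := by
    have h3 := Int.lt_zpow_succ_log_self (b := 2) (by norm_num) (κβ'/κg)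
    push_cast at h3
    have he : (2:ℝ) ^ (Int.log 2 (κβ' / κg) + 1) = (2:ℝ) ^ (Mβ : ℕ) := by
      have hMeq : Int.log 2 (κβ' / κg) + 1 = ((Mβ : ℕ) : ℤ) := by
        rw [hMβ]; push_cast; omega
      rw [hMeq, zpow_natCast]
    rw [he] at h3
    calc κβ' = κg * (κβ'/κg) := by field_simp
    _ < κg * 2 ^ Mβ := mul_lt_mul_of_pos_left h3 hκgpos
  have key2 : (∑' k : Fin 3 → ℤ,
        (if κg ≤ κ0 * knorm k ∧ κ0 * knorm k < κβ' then t k else 0)) ≤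
      ∑ j ∈ Finset.range Mβ, ∑' k : Fin 3 → ℤ,
        (if κg * 2 ^ j ≤ κ0 * knorm k ∧ κ0 * knorm k < 2 * (κg * 2 ^ j) then t k else 0) := by
    rw [← Summable.tsum_finsetSum (fun j _ => hsumIte _ _)]
    refine Summable.tsum_le_tsum (fun k => ?_) (hsumIte _ _)
      (summable_sum (fun j _ => hsumIte _ _))
    by_cases hc : κg ≤ κ0 * knorm k ∧ κ0 * knorm k < κβ'
    · rw [if_pos hc]
      obtain ⟨h1, h2⟩ := hc
      set x := κ0 * knorm k with hx
      have hxpos : 0 < x := lt_of_lt_of_le hκgpos h1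
      set l : ℤ := Int.log 2 (x / κg) with hl
      have hxg1 : (1:ℝ) ≤ x / κg := by rw [le_div_iff₀ hκgpos]; linarith
      have hl0 : 0 ≤ l := by
        rw [hl, ← Int.zpow_le_iff_le_log (by norm_num) (by positivity)]
        simpa using hxg1
      set j : ℕ := l.toNat with hj
      have hjl : (j:ℤ) = l := Int.toNat_of_nonneg hl0
      have hlow : κg * 2 ^ j ≤ x := by
        have h3 := Int.zpow_log_le_self (b := 2) (by norm_num)
          (show (0:ℝ) < x/κg by positivity)
        push_cast at h3
        rw [← hl, ← hjl, zpow_natCast] at h3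
        calc κg * 2 ^ j ≤ κg * (x/κg) := mul_le_mul_of_nonneg_left h3 hκgpos.le
        _ = x := by field_simp
      have hhigh : x < 2 * (κg * 2 ^ j) := by
        have h3 := Int.lt_zpow_succ_log_self (b := 2) (by norm_num) (x/κg)
        push_cast at h3
        rw [← hl] at h3
        have he : (2:ℝ) ^ (l + 1) = 2 * (2:ℝ) ^ (j : ℕ) := by
          rw [zpow_add₀ (by norm_num : (2:ℝ) ≠ 0), ← hjl, zpow_natCast]
          ring
        rw [he] at h3
        calc x = κg * (x/κg) := by field_simp
        _ < κg * (2 * 2 ^ j) := mul_lt_mul_of_pos_left h3 hκgpos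
        _ = 2 * (κg * 2 ^ j) := by ring
      have hjM : j ∈ Finset.range Mβ := by
        rw [Finset.mem_range]
        by_contra hcon
        push_neg at hcon
        have h5 : (2:ℝ) ^ Mβ ≤ (2:ℝ) ^ j := pow_le_pow_right₀ (by norm_num) hcon
        have h6 : κg * 2 ^ Mβ ≤ κg * 2 ^ j := mul_le_mul_of_nonneg_left h5 hκgpos.le
        linarith only [h6, hlow, h2, hMβcover]
      have hs := Finset.single_le_sum
        (f := fun i => if κg * 2 ^ i ≤ x ∧ x < 2 * (κg * 2 ^ i) then t k else 0)
        (fun i _ => by split_ifs; exacts [ht.nonneg k, le_refl 0]) hjM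
      refine le_trans (le_of_eq ?_) hs
      exact (if_pos ⟨hlow, hhigh⟩).symm
    · rw [if_neg hc]
      exact Finset.sum_nonneg
        (fun j _ => by split_ifs; exacts [ht.nonneg k, le_refl 0])
  -- shellSum in terms of W
  have hshell_eq : ∀ κ1 κ2 : ℝ, shellSum 3 L κ0 t κ1 κ2 =
      W * ∑' k : Fin 3 → ℤ,
        (if κ1 ≤ κ0 * knorm k ∧ κ0 * knorm k < κ2 then t k else 0) := by
    intro κ1 κ2
    rw [shellSum, hW]
  -- ================= PART 1 : upper bound =================
  set m : ℤ := Int.log 2 Sc with hm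
  have hm4 : 4 ≤ m := by
    rw [hm, ← Int.zpow_le_iff_le_log (by norm_num) hScpos]
    push_cast
    nlinarith only [hSc16]
  set N : ℕ := m.toNat / 2 with hN
  have hN2 : 2 ≤ N := by rw [hN]; omega
  have h2N : (2:ℝ) ^ N ≤ Sc ^ (1/2 : ℝ) := by
    have h4 := Int.zpow_log_le_self (b := 2) (by norm_num) hScpos
    push_cast at h4
    rw [← hm] at h4
    have h1 : ((2:ℝ) ^ N) ^ (2:ℕ) ≤ Sc := by
      calc ((2:ℝ)^N)^(2:ℕ) = (2:ℝ)^(N*2) := by rw [← pow_mul]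
      _ = (2:ℝ) ^ ((N*2 : ℕ) : ℤ) := (zpow_natCast _ _).symm
      _ ≤ (2:ℝ) ^ m := zpow_le_zpow_right₀ one_le_two (by rw [hN]; omega)
      _ ≤ Sc := h4
    have h2 := Real.rpow_le_rpow (by positivity) h1 (by norm_num : (0:ℝ) ≤ 1/2)
    calc (2:ℝ)^N = (((2:ℝ)^N) ^ (2:ℕ)) ^ (1/2:ℝ) := by
          rw [← Real.rpow_natCast ((2:ℝ)^N) 2, ← Real.rpow_mul (by positivity)]
          norm_num
    _ ≤ Sc ^ (1/2:ℝ) := h2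
  have hB1 : (N : ℝ) * (c3 * χ * (ν/ε) ^ (1/2:ℝ)) ≤ W * B := by
    have h1 : ∀ j ∈ Finset.range N, c3 * χ * (ν/ε) ^ (1/2:ℝ) ≤
        W * ∑' k : Fin 3 → ℤ,
          (if κε * 2^j ≤ κ0 * knorm k ∧ κ0 * knorm k < 2 * (κε * 2^j) then t k else 0) := by
      intro j hj
      rw [← hshell_eq]
      refine (hDi (κε * 2^j) ?_ ?_).1
      · have h2j : (1:ℝ) ≤ 2 ^ j := one_le_pow₀ one_le_two
        nlinarith only [h2j, hκεpos]
      · have h2j : (2:ℝ) ^ j ≤ 2 ^ N :=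
          pow_le_pow_right₀ one_le_two (Finset.mem_range.mp hj).le
        have h3 : (2:ℝ) ^ j ≤ Sc ^ (1/2:ℝ) := le_trans h2j h2N
        calc κε * 2 ^ j ≤ κε * Sc ^ (1/2:ℝ) := mul_le_mul_of_nonneg_left h3 hκεpos.le
        _ = κβ' := by rw [hκβeq]; ring
    have h2 := Finset.card_nsmul_le_sum (Finset.range N) _ _ h1
    rw [Finset.card_range, nsmul_eq_mul] at h2
    calc (N:ℝ) * (c3 * χ * (ν/ε) ^ (1/2:ℝ)) ≤
        ∑ j ∈ Finset.range N, W * ∑' k : Fin 3 → ℤ,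
          (if κε * 2^j ≤ κ0 * knorm k ∧ κ0 * knorm k < 2 * (κε * 2^j) then t k else 0) := h2
    _ = W * ∑ j ∈ Finset.range N, ∑' k : Fin 3 → ℤ,
          (if κε * 2^j ≤ κ0 * knorm k ∧ κ0 * knorm k < 2 * (κε * 2^j) then t k else 0) := by
        rw [Finset.mul_sum]
    _ ≤ W * B := mul_le_mul_of_nonneg_left (key1 κε hκεpos N) hWpos.le
  -- identity  μ (ν/ε)^{1/2} κβ'² = 1
  have hκβ2 : κβ' ^ (2:ℝ) = Sc * (ε / ν^3) ^ (1/2:ℝ) := by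
    have hκε2 : κε ^ (2:ℝ) = (ε / ν^3) ^ (1/2:ℝ) := by
      rw [hκεeq, ← Real.rpow_mul (by positivity)]
      norm_num
    rw [hκβeq, Real.mul_rpow (by positivity) (by positivity), ← hκε2,
      ← Real.rpow_mul hScpos.le]
    norm_num [Real.rpow_one]
  have hid : μ * ((ν/ε) ^ (1/2:ℝ)) * κβ' ^ (2:ℝ) = 1 := by
    have hmm : ((ν/ε) ^ (1/2:ℝ)) * ((ε/ν^3) ^ (1/2:ℝ)) = ν⁻¹ := by
      rw [← Real.mul_rpow (by positivity) (by positivity)]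
      have harg : (ν/ε) * (ε/ν^3) = ((ν^2 : ℝ))⁻¹ := by field_simp
      rw [harg, Real.inv_rpow (by positivity), ← Real.rpow_natCast ν 2,
        ← Real.rpow_mul hν.le]
      norm_num
    rw [hκβ2, hSceq]
    calc μ * ((ν/ε) ^ (1/2:ℝ)) * (ν/μ * (ε/ν^3) ^ (1/2:ℝ))
        = (μ * (ν/μ)) * (((ν/ε) ^ (1/2:ℝ)) * ((ε/ν^3) ^ (1/2:ℝ))) := by ring
    _ = 1 := by rw [hmm]; field_simp
  -- log Sc ≤ 4 N
  have hlnN : Real.log Sc ≤ 4 * N := by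
    have h4 := Int.lt_zpow_succ_log_self (b := 2) (by norm_num) Sc
    push_cast at h4
    rw [← hm] at h4
    have h5 : Real.log Sc ≤ ((m:ℝ) + 1) * Real.log 2 := by
      have h6 := Real.log_le_log hScpos h4.le
      rwa [Real.log_zpow, Int.cast_add, Int.cast_one] at h6
    have h7 : ((m:ℝ)+1) * Real.log 2 ≤ ((m:ℝ)+1) * 0.6931471808 := by
      have : (0:ℝ) ≤ (m:ℝ) + 1 := by
        have : (4:ℝ) ≤ (m:ℝ) := by exact_mod_cast hm4
        linarith
      exact mul_le_mul_of_nonneg_left Real.log_two_lt_d9.le this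
    have h8 : 2*(m:ℝ) - 2 ≤ 4 * N := by
      have h9 : m = (m.toNat : ℤ) := by omega
      have h11 : 2 * m.toNat ≤ 4 * N + 2 := by rw [hN]; omega
      have h12 : (2:ℝ) * (m.toNat:ℝ) ≤ 4 * (N:ℝ) + 2 := by exact_mod_cast h11
      have h13 : ((m:ℝ)) = (m.toNat : ℝ) := by exact_mod_cast h9
      rw [h13]; linarith only [h12]
    have hm4' : (4:ℝ) ≤ (m:ℝ) := by exact_mod_cast hm4
    linarith only [h5, h7, h8, hm4']
  -- conclude upper bound
  have hupper : kThetaSq 3 κ0 t ≤ 4 / c3 * κβ' ^ (2:ℝ) / Real.log Sc := by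
    rw [hkθ, div_le_div_iff₀ hBpos hlnScpos]
    set u : ℝ := μ * ((ν/ε) ^ (1/2:ℝ)) with hu
    have hupos : 0 < u := by rw [hu]; positivity
    have hBge : (N:ℝ) * c3 * u * (κ0^2 * A) ≤ B := by
      have h12 : W * ((N:ℝ) * c3 * u * (κ0^2*A)) ≤ W * B := by
        calc W * ((N:ℝ) * c3 * u * (κ0^2*A)) = (N : ℝ) * (c3 * (μ * W * κ0^2 * A) * (ν/ε) ^ (1/2:ℝ)) := by
              rw [hu]; ring
        _ = (N : ℝ) * (c3 * χ * (ν/ε) ^ (1/2:ℝ)) := by rw [← hχ]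
        _ ≤ W * B := hB1
      exact le_of_mul_le_mul_left h12 hWpos
    have h13 : κ0^2*A*Real.log Sc ≤ κ0^2*A*(4*N) :=
      mul_le_mul_of_nonneg_left hlnN (by positivity)
    have h14 : 4 / c3 * κβ' ^ (2:ℝ) * ((N:ℝ) * c3 * u * (κ0^2*A)) ≤
        4 / c3 * κβ' ^ (2:ℝ) * B := mul_le_mul_of_nonneg_left hBge (by positivity)
    have h15 : 4 / c3 * κβ' ^ (2:ℝ) * ((N:ℝ) * c3 * u * (κ0^2*A)) =
        κ0^2*A*(4*N) * (u * κβ' ^ (2:ℝ)) := by field_simp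
    have h16 : u * κβ' ^ (2:ℝ) = 1 := by rw [hu]; exact hid
    rw [h16, mul_one] at h15
    rw [h15] at h14
    linarith only [h13, h14]
  -- ================= PART 2 : lower bound =================
  classical
  -- geometric ratio
  set q : ℝ := (2:ℝ) ^ (-2 / 3 : ℝ) with hqdef
  have hqpos : 0 < q := Real.rpow_pos_of_pos two_pos _
  have hq23 : q ≤ 2/3 := by
    have h1 : (2:ℝ) ^ ((2:ℝ)/3) * q = 1 := by
      rw [hqdef, ← Real.rpow_add two_pos]; norm_num
    have h2 : ((2:ℝ) ^ ((2:ℝ)/3)) ^ (3:ℕ) = 4 := by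
      rw [← Real.rpow_natCast ((2:ℝ)^((2:ℝ)/3)) 3, ← Real.rpow_mul (by norm_num)]
      norm_num
    have h3 : (3:ℝ)/2 ≤ (2:ℝ) ^ ((2:ℝ)/3) := by
      refine le_of_pow_le_pow_left₀ (by norm_num) (by positivity) (n := 3) ?_
      rw [h2]; norm_num
    nlinarith only [h1, h3, hqpos, mul_le_mul_of_nonneg_right h3 hqpos.le]
  have hq1 : q < 1 := by linarith
  have hgeom : ∑ j ∈ Finset.range Mβ, q ^ j ≤ 3 := by
    have h1 := Summable.sum_le_tsum (Finset.range Mβ) (fun i _ => by positivity)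
      (summable_geometric_of_lt_one hqpos.le hq1)
    have h2 : ∑' n : ℕ, q ^ n = (1-q)⁻¹ := tsum_geometric_of_lt_one hqpos.le hq1
    have h3 : (1-q)⁻¹ ≤ 3 := by
      rw [inv_le_comm₀ (by linarith) (by norm_num)]
      linarith
    linarith only [h1, h2 ▸ h1, h3]
  have hpowq : ∀ j : ℕ, ((2:ℝ) ^ j) ^ (-2 / 3 : ℝ) = q ^ j := by
    intro j
    rw [← Real.rpow_natCast (2:ℝ) j, ← Real.rpow_mul (by norm_num), mul_comm,
      Real.rpow_mul (by norm_num), Real.rpow_natCast]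
  -- the quantity U
  set U : ℝ := 3*c2*ε^(-1 / 3:ℝ)*κg^(-2 / 3:ℝ) + 2*c4*(ν/ε)^(1 / 2:ℝ)*Real.log Sc with hU
  have hUpos : 0 < U := by
    have h1 : 0 < 3*c2*ε^(-1 / 3:ℝ)*κg^(-2 / 3:ℝ) := by positivity
    have h2 : 0 < 2*c4*(ν/ε)^(1 / 2:ℝ)*Real.log Sc := by
      have : (0:ℝ) < 2*c4*(ν/ε)^(1 / 2:ℝ) := by positivity
      exact mul_pos this hlnScpos
    rw [hU]; linarith
  -- count of dissipation shells
  set Dset : Finset ℕ := (Finset.range Mβ).filter (fun j => ¬ (κg * 2^j ≤ κε)) with hDset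
  have hcard : (Dset.card : ℝ) ≤ 2 * Real.log Sc := by
    by_cases hDempty : Dset = ∅
    · rw [hDempty]; simp; positivity
    · obtain ⟨j0, hj0⟩ := Finset.nonempty_iff_ne_empty.mpr hDempty
      have hj0' := Finset.mem_filter.mp (hDset ▸ hj0)
      have hex : ∃ n : ℕ, κε < κg * 2^n := ⟨j0, not_le.mp hj0'.2⟩
      set j1 := Nat.find hex with hj1
      have hj1spec : κε < κg * 2 ^ j1 := Nat.find_spec hex
      have hsub : Dset ⊆ Finset.Ico j1 Mβ := by
        intro j hj
        have hj' := Finset.mem_filter.mp (hDset ▸ hj)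
        exact Finset.mem_Ico.mpr ⟨Nat.find_min' hex (not_le.mp hj'.2),
          Finset.mem_range.mp hj'.1⟩
      have hj1M : j1 < Mβ := by
        have := Finset.mem_Ico.mp (hsub hj0)
        omega
      set d : ℕ := Mβ - 1 - j1 with hd
      have hcardle : Dset.card ≤ d + 1 := by
        calc Dset.card ≤ (Finset.Ico j1 Mβ).card := Finset.card_le_card hsub
        _ = Mβ - j1 := Nat.card_Ico _ _
        _ ≤ d + 1 := by omega
      have h2d : (2:ℝ) ^ d * κε < κβ' := by
        have ha : κg * 2 ^ (Mβ - 1) ≤ κβ' := hMβupper (Mβ - 1) (by omega)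
        have hb : (2:ℝ)^d * κε < (2:ℝ)^d * (κg * 2^j1) :=
          mul_lt_mul_of_pos_left hj1spec (by positivity)
        have hc : (2:ℝ)^d * (κg * 2^j1) = κg * 2 ^ (Mβ - 1) := by
          rw [show Mβ - 1 = d + j1 by omega, pow_add]
          ring
        rw [hc] at hb
        linarith
      have hdlog : (d:ℝ) * Real.log 2 ≤ (1/2) * Real.log Sc := by
        have h1 : (2:ℝ)^d < Sc ^ (1/2:ℝ) := by
          have h2 : (2:ℝ)^d * κε < Sc ^ (1/2:ℝ) * κε := by rw [← hκβeq]; exact h2d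
          exact lt_of_mul_lt_mul_right h2 hκεpos.le
        have h2 := Real.log_le_log (by positivity) h1.le
        rwa [Real.log_pow, Real.log_rpow hScpos] at h2
      have hlog2 : (0.6931471803:ℝ) < Real.log 2 := Real.log_two_gt_d9
      have hd2 : (d:ℝ) * 0.6931471803 ≤ (d:ℝ) * Real.log 2 :=
        mul_le_mul_of_nonneg_left hlog2.le (Nat.cast_nonneg d)
      have hcardle' : (Dset.card : ℝ) ≤ (d:ℝ) + 1 := by exact_mod_cast hcardle
      linarith only [hdlog, hd2, hcardle', hlnSc]
  -- covering estimate
  have hSgβ : shellSum 3 L κ0 t κg κβ' ≤ χ * U := by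
    have hcover : shellSum 3 L κ0 t κg κβ' ≤
        ∑ j ∈ Finset.range Mβ, shellSum 3 L κ0 t (κg*2^j) (2*(κg*2^j)) := by
      rw [hshell_eq]
      calc W * (∑' k : Fin 3 → ℤ,
            (if κg ≤ κ0 * knorm k ∧ κ0 * knorm k < κβ' then t k else 0)) ≤
          W * ∑ j ∈ Finset.range Mβ, ∑' k : Fin 3 → ℤ,
            (if κg * 2 ^ j ≤ κ0 * knorm k ∧ κ0 * knorm k < 2 * (κg * 2 ^ j) then t k else 0) :=
        mul_le_mul_of_nonneg_left key2 hWpos.le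
      _ = ∑ j ∈ Finset.range Mβ, shellSum 3 L κ0 t (κg*2^j) (2*(κg*2^j)) := by
        rw [Finset.mul_sum]
        exact Finset.sum_congr rfl (fun j _ => (hshell_eq _ _).symm)
    have hper : ∀ j ∈ Finset.range Mβ, shellSum 3 L κ0 t (κg*2^j) (2*(κg*2^j)) ≤
        (c2*χ*ε^(-1 / 3:ℝ)*κg^(-2 / 3:ℝ)) * q^j +
          (if κg*2^j ≤ κε then 0 else c4*χ*(ν/ε)^(1 / 2:ℝ)) := by
      intro j hj
      by_cases hcase : κg*2^j ≤ κε
      · rw [if_pos hcase, add_zero]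
        have hb := (hIn (κg*2^j)
          (le_mul_of_one_le_right hκgpos.le (one_le_pow₀ one_le_two)) hcase).2
        have he : c2*χ*ε^(-1 / 3:ℝ)*((κg*2^j)^(-2 / 3:ℝ)) =
            (c2*χ*ε^(-1 / 3:ℝ)*κg^(-2 / 3:ℝ)) * q^j := by
          rw [Real.mul_rpow hκgpos.le (by positivity), hpowq j]
          ring
        rw [← he]
        exact hb
      · rw [if_neg hcase]
        have hb := (hDi (κg*2^j) (not_le.mp hcase).le
          (hMβupper j (Finset.mem_range.mp hj))).2
        have hpos : 0 ≤ (c2*χ*ε^(-1 / 3:ℝ)*κg^(-2 / 3:ℝ)) * q^j := by positivity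
        linarith
    have hsum1 : ∑ j ∈ Finset.range Mβ, (c2*χ*ε^(-1 / 3:ℝ)*κg^(-2 / 3:ℝ)) * q^j ≤
        χ * (3*c2*ε^(-1 / 3:ℝ)*κg^(-2 / 3:ℝ)) := by
      rw [← Finset.mul_sum]
      have h1 : 0 ≤ c2*χ*ε^(-1 / 3:ℝ)*κg^(-2 / 3:ℝ) := by positivity
      calc (c2*χ*ε^(-1 / 3:ℝ)*κg^(-2 / 3:ℝ)) * (∑ j ∈ Finset.range Mβ, q^j) ≤
          (c2*χ*ε^(-1 / 3:ℝ)*κg^(-2 / 3:ℝ)) * 3 := mul_le_mul_of_nonneg_left hgeom h1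
      _ = χ * (3*c2*ε^(-1 / 3:ℝ)*κg^(-2 / 3:ℝ)) := by ring
    have hsum2 : ∑ j ∈ Finset.range Mβ,
        (if κg*2^j ≤ κε then 0 else c4*χ*(ν/ε)^(1 / 2:ℝ)) ≤
        χ * (2*c4*(ν/ε)^(1 / 2:ℝ)*Real.log Sc) := by
      have heq : (∑ j ∈ Finset.range Mβ,
          (if κg*2^j ≤ κε then (0:ℝ) else c4*χ*(ν/ε)^(1 / 2:ℝ))) =
          (Dset.card : ℝ) * (c4*χ*(ν/ε)^(1 / 2:ℝ)) := by
        rw [Finset.sum_ite, Finset.sum_const_zero, Finset.sum_const, zero_add,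
          nsmul_eq_mul]
      rw [heq]
      have hv : 0 ≤ c4*χ*(ν/ε)^(1 / 2:ℝ) := by positivity
      calc (Dset.card : ℝ) * (c4*χ*(ν/ε)^(1 / 2:ℝ)) ≤
          (2*Real.log Sc) * (c4*χ*(ν/ε)^(1 / 2:ℝ)) := mul_le_mul_of_nonneg_right hcard hv
      _ = χ * (2*c4*(ν/ε)^(1 / 2:ℝ)*Real.log Sc) := by ring
    calc shellSum 3 L κ0 t κg κβ' ≤ _ := hcover
    _ ≤ ∑ j ∈ Finset.range Mβ, ((c2*χ*ε^(-1 / 3:ℝ)*κg^(-2 / 3:ℝ)) * q^j +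
          (if κg*2^j ≤ κε then 0 else c4*χ*(ν/ε)^(1 / 2:ℝ))) := Finset.sum_le_sum hper
    _ = (∑ j ∈ Finset.range Mβ, (c2*χ*ε^(-1 / 3:ℝ)*κg^(-2 / 3:ℝ)) * q^j) +
        ∑ j ∈ Finset.range Mβ, (if κg*2^j ≤ κε then 0 else c4*χ*(ν/ε)^(1 / 2:ℝ)) :=
      Finset.sum_add_distrib
    _ ≤ χ * (3*c2*ε^(-1 / 3:ℝ)*κg^(-2 / 3:ℝ)) + χ * (2*c4*(ν/ε)^(1 / 2:ℝ)*Real.log Sc) := by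
      exact add_le_add hsum1 hsum2
    _ = χ * U := by rw [hU]; ring
  -- logarithmic quantities
  have hlog_le : ∀ x y : ℝ, 0 < x → 0 < y → Real.log x ≤ Real.log y → x ≤ y := by
    intro x y hx hy h
    calc x = Real.exp (Real.log x) := (Real.exp_log hx).symm
    _ ≤ Real.exp (Real.log y) := Real.exp_le_exp.mpr h
    _ = y := Real.exp_log hy
  have hGpos : (0:ℝ) < G := lt_of_lt_of_le one_pos hG
  have hκfppos : 0 < κfp := lt_of_lt_of_le hκ0pos hκ0fp
  have hlβ : Real.log κβ' = (1/2) * Real.log Sc + Real.log κε := by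
    rw [hκβeq, Real.log_mul (by positivity) hκεpos.ne', Real.log_rpow hScpos]
  have hlκε : Real.log κε = (1/4) * (Real.log ε - 3 * Real.log ν) := by
    rw [hκεeq, Real.log_rpow (by positivity), Real.log_div hε.ne' (by positivity),
      Real.log_pow]
    push_cast
    ring
  have hlS : Real.log Sc = Real.log ν - Real.log μ := by
    rw [hSceq, Real.log_div hν.ne' hμ.ne']
  have hlg : Real.log κ0 ≤ Real.log κg := Real.log_le_log hκ0pos hκ0g
  have hl0β : Real.log κ0 ≤ Real.log κβ' := Real.log_le_log hκ0pos hκ0β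
  have hρ : Real.log κβ' ≤ Real.log c6 + (3/8) * Real.log G +
      (1/2) * Real.log Sc + Real.log κ0 := by
    have hp1 : (κ0/κfp) ^ (1 / 8 : ℝ) ≤ 1 :=
      Real.rpow_le_one (by positivity) (by rw [div_le_one hκfppos]; exact hκ0fp)
        (by norm_num)
    have h1 : κε ≤ c6 * κ0 * G ^ (3 / 8 : ℝ) := by
      have h2 : c6 * κ0 * (κ0/κfp) ^ (1 / 8 : ℝ) ≤ c6 * κ0 :=
        mul_le_of_le_one_right (by positivity) hp1
      calc κε ≤ c6 * κ0 * (κ0 / κfp) ^ (1 / 8 : ℝ) * G ^ (3 / 8 : ℝ) := hκεbd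
      _ ≤ c6 * κ0 * G ^ (3 / 8 : ℝ) :=
        mul_le_mul_of_nonneg_right h2 (by positivity)
    have h3 : κβ' ≤ Sc ^ (1/2:ℝ) * (c6 * κ0 * G ^ (3 / 8 : ℝ)) := by
      rw [hκβeq]
      exact mul_le_mul_of_nonneg_left h1 (by positivity)
    have h4 := Real.log_le_log hκβpos h3
    rw [Real.log_mul (by positivity) (by positivity), Real.log_rpow hScpos,
      Real.log_mul (by positivity) (by positivity),
      Real.log_mul hc6.ne' hκ0pos.ne', Real.log_rpow hGpos] at h4
    linarith only [h4]
  have hGS : (3*r - 4) * Real.log G ≤ (8 - 4*r) * Real.log Sc := by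
    have h1 := Real.log_le_log (Real.rpow_pos_of_pos hGpos _) hGSc
    rw [Real.log_rpow hGpos] at h1
    have h2 : (8 - 4*r) * ((3 * r - 4) / (8 - 4 * r) * Real.log G) ≤
        (8 - 4*r) * Real.log Sc := mul_le_mul_of_nonneg_left h1 (by linarith)
    have h3 : (8 - 4*r) * ((3 * r - 4) / (8 - 4 * r) * Real.log G) =
        (3*r - 4) * Real.log G := by
      have hne : (8:ℝ) - 4 * r ≠ 0 := by nlinarith only [hr2]
      field_simp
    linarith only [h2, h3]
  have hlG0 : 0 ≤ Real.log G := Real.log_nonneg hG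
  -- the two key elementary bounds
  have hT1 : μ * ε^(-1 / 3:ℝ) * κg^(-2 / 3:ℝ) * (κβ' ^ r * κ0 ^ (2-r)) ≤
      c6 ^ (r - 4/3 : ℝ) := by
    apply hlog_le _ _ (by positivity) (by positivity)
    rw [Real.log_mul (by positivity) (by positivity),
      Real.log_mul (by positivity) (by positivity),
      Real.log_mul (by positivity) (by positivity),
      Real.log_mul (by positivity) (by positivity),
      Real.log_rpow hε, Real.log_rpow hκgpos, Real.log_rpow hκβpos,
      Real.log_rpow hκ0pos, Real.log_rpow hc6]
    have hmul1 : (r - 4/3) * (Real.log κβ' - Real.log κ0) ≤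
        (r - 4/3) * (Real.log c6 + (3/8) * Real.log G + (1/2) * Real.log Sc) :=
      mul_le_mul_of_nonneg_left (by linarith only [hρ]) (by linarith only [hr1])
    nlinarith only [hmul1, hGS, hlg, hlβ, hlκε, hlS]
  have hT2 : μ * (ν/ε)^(1 / 2:ℝ) * (κβ' ^ r * κ0 ^ (2-r)) ≤ 1 := by
    apply hlog_le _ _ (by positivity) one_pos
    rw [Real.log_one, Real.log_mul (by positivity) (by positivity),
      Real.log_mul (by positivity) (by positivity),
      Real.log_mul (by positivity) (by positivity),
      Real.log_rpow (by positivity), Real.log_div hν.ne' hε.ne',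
      Real.log_rpow hκβpos, Real.log_rpow hκ0pos]
    have hmul2 : (2 - r) * (Real.log κ0 - Real.log κβ') ≤ 0 :=
      mul_nonpos_iff.mpr (Or.inl ⟨by linarith only [hr2], by linarith only [hl0β]⟩)
    nlinarith only [hmul2, hlβ, hlκε, hlS]
  -- assembly of the lower bound
  have hBle : B ≤ c5 * μ * (κ0^2*A) * U := by
    have h1 : W * B ≤ c5 * (χ * U) := by
      calc W * B = shellSumTop 3 L κ0 t κ0 := hTopEq.symm
      _ ≤ c5 * shellSum 3 L κ0 t κg κβ' := hTop
      _ ≤ c5 * (χ * U) := mul_le_mul_of_nonneg_left hSgβ hc5.le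
    have h2 : c5 * (χ * U) = W * (c5 * μ * (κ0^2*A) * U) := by
      rw [hχ]; ring
    rw [h2] at h1
    exact le_of_mul_le_mul_left h1 hWpos
  have hlower : (c5 * (3 * c2 * c6 ^ (r - 4/3 : ℝ) + 2 * c4))⁻¹ * κβ' ^ r *
      κ0 ^ (2 - r) / Real.log Sc ≤ kThetaSq 3 κ0 t := by
    set K1 : ℝ := c6 ^ (r - 4/3 : ℝ) with hK1
    have hK1pos : 0 < K1 := Real.rpow_pos_of_pos hc6 _
    rw [hkθ, div_le_div_iff₀ hlnScpos hBpos]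
    have hUbound : μ * U * (κβ' ^ r * κ0 ^ (2-r)) ≤
        (3*c2*K1 + 2*c4) * Real.log Sc := by
      have e1 : μ * U * (κβ' ^ r * κ0 ^ (2-r)) =
          3*c2*(μ * ε^(-1 / 3:ℝ)*κg^(-2 / 3:ℝ)*(κβ'^r*κ0^(2-r))) +
          2*c4*Real.log Sc*(μ*(ν/ε)^(1 / 2:ℝ)*(κβ'^r*κ0^(2-r))) := by
        rw [hU]; ring
      rw [e1]
      have b1 : 3*c2*(μ * ε^(-1 / 3:ℝ)*κg^(-2 / 3:ℝ)*(κβ'^r*κ0^(2-r))) ≤ 3*c2*K1 :=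
        mul_le_mul_of_nonneg_left hT1 (by positivity)
      have b2 : 2*c4*Real.log Sc*(μ*(ν/ε)^(1 / 2:ℝ)*(κβ'^r*κ0^(2-r))) ≤
          2*c4*Real.log Sc*1 := by
        refine mul_le_mul_of_nonneg_left hT2 ?_
        have : (0:ℝ) < 2*c4 := by positivity
        nlinarith only [this, hlnScpos]
      have b3 : 3*c2*K1 ≤ 3*c2*K1*Real.log Sc :=
        le_mul_of_one_le_right (by positivity) hlnSc
      nlinarith only [b1, b2, b3]
    have hcK : ((c5 * (3 * c2 * K1 + 2 * c4))⁻¹) * (c5 * (3 * c2 * K1 + 2 * c4)) = 1 := by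
      refine inv_mul_cancel₀ ?_
      positivity
    have h5 : (c5 * (3 * c2 * K1 + 2 * c4))⁻¹ * κβ' ^ r * κ0 ^ (2 - r) * B ≤
        (c5 * (3 * c2 * K1 + 2 * c4))⁻¹ * κβ' ^ r * κ0 ^ (2 - r) *
          (c5 * μ * (κ0^2*A) * U) :=
      mul_le_mul_of_nonneg_left hBle (by positivity)
    have h6 : (c5 * (3 * c2 * K1 + 2 * c4))⁻¹ * κβ' ^ r * κ0 ^ (2 - r) *
          (c5 * μ * (κ0^2*A) * U) =
        (c5 * (3 * c2 * K1 + 2 * c4))⁻¹ * c5 * (κ0^2*A) *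
          (μ * U * (κβ' ^ r * κ0 ^ (2-r))) := by ring
    have h7 : (c5 * (3 * c2 * K1 + 2 * c4))⁻¹ * c5 * (κ0^2*A) *
          (μ * U * (κβ' ^ r * κ0 ^ (2-r))) ≤
        (c5 * (3 * c2 * K1 + 2 * c4))⁻¹ * c5 * (κ0^2*A) *
          ((3*c2*K1 + 2*c4) * Real.log Sc) :=
      mul_le_mul_of_nonneg_left hUbound (by positivity)
    have h8 : (c5 * (3 * c2 * K1 + 2 * c4))⁻¹ * c5 * (κ0^2*A) *
          ((3*c2*K1 + 2*c4) * Real.log Sc) =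
        ((c5 * (3 * c2 * K1 + 2 * c4))⁻¹ * (c5 * (3 * c2 * K1 + 2 * c4))) *
          ((κ0^2*A) * Real.log Sc) := by ring
    rw [hcK, one_mul] at h8
    calc (c5 * (3 * c2 * K1 + 2 * c4))⁻¹ * κβ' ^ r * κ0 ^ (2 - r) * B ≤ _ := h5
    _ = _ := h6
    _ ≤ _ := h7
    _ = (κ0^2*A) * Real.log Sc := h8
    _ = κ0^2*A * Real.log Sc := by ring
  exact ⟨hlower, hupper⟩
end
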